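/- arXiv:2108.05626 — 8 statements merged into one kernel-verified Lean document; each statement's English description precedes it below -/
import Mathlib

section
/- Let m1, m2, m3 > 0, let Δx1, Δx2, Δx3 > 0, set α_max = m1·Δx1 + m2·Δx2 + m3·Δx3, and let 0 ≤ α ≤ α_max. Then the three-dimensional Lebesgue measure of the cut region {x ∈ [0,Δx1]×[0,Δx2]×[0,Δx3] : m1·x1 + m2·x2 + m3·x3 ≤ α} equals (1/(6·m1·m2·m3))·[α³ − Σ_{i=1}^{3} F₃(α − m_i·Δx_i) + Σ_{i=1}^{3} F₃(α − α_max + m_i·Δx_i)]. -/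
open MeasureTheory

/-- Truncated cube function: `F₃ y = y³` for `y > 0`, else `0`. -/
noncomputable def F3 (y : ℝ) : ℝ := if 0 < y then y ^ 3 else 0

noncomputable def ramp (c t : ℝ) : ℝ := max 0 (min c t)
noncomputable def sq2 (c t : ℝ) : ℝ := ((max t 0)^2 - (max (t - c) 0)^2) / 2
noncomputable def cb6 (c t : ℝ) : ℝ := ((max t 0)^3 - (max (t - c) 0)^3) / 6

lemma hasDerivAt_max_sq (t : ℝ) :
    HasDerivAt (fun y : ℝ => (max y 0) ^ 2) (2 * max t 0) t := by
  rcases lt_trichotomy t 0 with h | h | h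
  · have hev : (fun y : ℝ => (max y 0) ^ 2) =ᶠ[nhds t] fun _ => (0:ℝ) := by
      filter_upwards [Iio_mem_nhds h] with y hy
      simp [max_eq_right (le_of_lt (Set.mem_Iio.mp hy))]
    have := (hasDerivAt_const t (0:ℝ)).congr_of_eventuallyEq hev
    simpa [max_eq_right h.le] using this
  · subst h
    rw [hasDerivAt_iff_tendsto_slope]
    have hb : ∀ y : ℝ, ‖slope (fun y : ℝ => (max y 0) ^ 2) 0 y‖ ≤ |y| := by
      intro y
      rcases eq_or_ne y 0 with rfl | hy
      · simp [slope]
      · have h1 : (max y 0)^2 ≤ y^2 := by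
          rcases le_total y 0 with h | h
          · simp [max_eq_right h]; positivity
          · simp [max_eq_left h]
        have h2 : slope (fun y : ℝ => (max y 0) ^ 2) 0 y = (max y 0)^2 / y := by
          simp [slope_def_field]
        rw [h2, Real.norm_eq_abs, abs_div]
        rw [div_le_iff₀ (abs_pos.mpr hy)]
        calc |(max y 0)^2| = (max y 0)^2 := abs_of_nonneg (by positivity)
          _ ≤ y^2 := h1
          _ = |y| * |y| := by rw [abs_mul_abs_self]; ring
    have hg : Filter.Tendsto (fun y : ℝ => |y|) (nhdsWithin 0 {(0:ℝ)}ᶜ) (nhds 0) := by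
      have := (continuous_abs.tendsto (0:ℝ)).mono_left (nhdsWithin_le_nhds (s := {(0:ℝ)}ᶜ))
      simpa using this
    simpa using squeeze_zero_norm hb hg
  · have hev : (fun y : ℝ => (max y 0) ^ 2) =ᶠ[nhds t] fun y => y ^ 2 := by
      filter_upwards [Ioi_mem_nhds h] with y hy
      simp [max_eq_left (le_of_lt (Set.mem_Ioi.mp hy))]
    have := (hasDerivAt_pow 2 t).congr_of_eventuallyEq hev
    simpa [max_eq_left h.le] using this

lemma hasDerivAt_max_cb (t : ℝ) :
    HasDerivAt (fun y : ℝ => (max y 0) ^ 3) (3 * (max t 0) ^ 2) t := by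
  rcases lt_trichotomy t 0 with h | h | h
  · have hev : (fun y : ℝ => (max y 0) ^ 3) =ᶠ[nhds t] fun _ => (0:ℝ) := by
      filter_upwards [Iio_mem_nhds h] with y hy
      simp [max_eq_right (le_of_lt (Set.mem_Iio.mp hy))]
    have := (hasDerivAt_const t (0:ℝ)).congr_of_eventuallyEq hev
    simpa [max_eq_right h.le] using this
  · subst h
    rw [hasDerivAt_iff_tendsto_slope]
    have hb : ∀ y : ℝ, ‖slope (fun y : ℝ => (max y 0) ^ 3) 0 y‖ ≤ y ^ 2 := by
      intro y
      rcases eq_or_ne y 0 with rfl | hy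
      · simp [slope]
      · have h1 : (max y 0)^3 ≤ |y|^3 := by
          apply pow_le_pow_left₀ (le_max_right _ _)
          rcases le_total y 0 with h | h
          · simp [max_eq_right h]
          · simp [max_eq_left h, abs_of_nonneg h]
        have h2 : slope (fun y : ℝ => (max y 0) ^ 3) 0 y = (max y 0)^3 / y := by
          simp [slope_def_field]
        rw [h2, Real.norm_eq_abs, abs_div]
        rw [div_le_iff₀ (abs_pos.mpr hy)]
        calc |(max y 0)^3| = (max y 0)^3 := abs_of_nonneg (by positivity)
          _ ≤ |y|^3 := h1
          _ = y^2 * |y| := by rw [pow_succ, sq_abs]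
    have hg : Filter.Tendsto (fun y : ℝ => y ^ 2) (nhdsWithin 0 {(0:ℝ)}ᶜ) (nhds 0) := by
      have := ((continuous_pow 2).tendsto (0:ℝ)).mono_left (nhdsWithin_le_nhds (s := {(0:ℝ)}ᶜ))
      simpa using this
    simpa using squeeze_zero_norm hb hg
  · have hev : (fun y : ℝ => (max y 0) ^ 3) =ᶠ[nhds t] fun y => y ^ 3 := by
      filter_upwards [Ioi_mem_nhds h] with y hy
      simp [max_eq_left (le_of_lt (Set.mem_Ioi.mp hy))]
    have := (hasDerivAt_pow 3 t).congr_of_eventuallyEq hev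
    simpa [max_eq_left h.le] using this

lemma ramp_eq (c : ℝ) (hc : 0 ≤ c) (t : ℝ) :
    max t 0 - max (t - c) 0 = ramp c t := by
  unfold ramp
  rw [max_def, max_def, max_def, min_def]
  split_ifs <;> linarith

lemma hasDerivAt_sq2 (c : ℝ) (hc : 0 ≤ c) (t : ℝ) : HasDerivAt (sq2 c) (ramp c t) t := by
  have h2 : HasDerivAt (fun y : ℝ => (max (y - c) 0) ^ 2) (2 * max (t - c) 0) t := by
    have := (hasDerivAt_max_sq (t - c)).comp t ((hasDerivAt_id t).sub_const c)
    exact HasDerivAt.comp_sub_const t c (hasDerivAt_max_sq (t - c))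
  have := ((hasDerivAt_max_sq t).sub h2).div_const 2
  unfold sq2
  convert this using 1
  · rfl
  · rfl
  · rfl
  rw [← ramp_eq c hc t]; ring

lemma hasDerivAt_cb6 (c : ℝ) (t : ℝ) : HasDerivAt (cb6 c) (sq2 c t) t := by
  have h2 : HasDerivAt (fun y : ℝ => (max (y - c) 0) ^ 3) (3 * (max (t - c) 0) ^ 2) t := by
    have := (hasDerivAt_max_cb (t - c)).comp t ((hasDerivAt_id t).sub_const c)
    exact HasDerivAt.comp_sub_const t c (hasDerivAt_max_cb (t - c))
  have := ((hasDerivAt_max_cb t).sub h2).div_const 6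
  unfold cb6
  convert this using 1
  · rfl
  · rfl
  · rfl
  unfold sq2; ring

lemma ramp_nonneg (c t : ℝ) : 0 ≤ ramp c t := le_max_left _ _

lemma ramp_continuous (c : ℝ) : Continuous (ramp c) := by
  unfold ramp; fun_prop

lemma sq2_continuous (c : ℝ) : Continuous (sq2 c) := by
  unfold sq2; fun_prop

lemma sq2_mono (c : ℝ) (hc : 0 ≤ c) : Monotone (sq2 c) := by
  apply monotone_of_deriv_nonneg
  · exact fun t => (hasDerivAt_sq2 c hc t).differentiableAt
  · intro t
    rw [(hasDerivAt_sq2 c hc t).deriv]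
    exact ramp_nonneg c t

lemma ramp_div {m d : ℝ} (hm : 0 < m) (hd : 0 ≤ d) (u : ℝ) :
    (1/m) * ramp (m*d) u = max 0 (min d (u/m)) := by
  unfold ramp
  have hmd : 0 ≤ m * d := by positivity
  rcases le_total u 0 with h | h
  · have hu : u / m ≤ 0 := by
      rw [div_nonpos_iff]; right; exact ⟨h, hm.le⟩
    rw [min_eq_right (h.trans hmd), max_eq_left h, mul_zero,
      min_eq_right (hu.trans hd), max_eq_left hu]
  · rcases le_total u (m*d) with h2 | h2
    · rw [min_eq_right h2, max_eq_right h]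
      rw [min_eq_right, max_eq_right]
      · field_simp
      · positivity
      · rw [div_le_iff₀ hm]; linarith
    · rw [min_eq_left h2, max_eq_right hmd]
      rw [min_eq_left, max_eq_right hd]
      · field_simp
      · rw [le_div_iff₀ hm]; linarith

lemma integral_affine {f F : ℝ → ℝ} (hF : ∀ t, HasDerivAt F (f t) t) (hf : Continuous f)
    (a m d : ℝ) (hm : 0 < m) :
    ∫ x in (0:ℝ)..d, f (a - m * x) = (F a - F (a - m * d)) / m := by
  have key : ∀ x : ℝ, HasDerivAt (fun x : ℝ => -(F (a - m * x) / m)) (f (a - m * x)) x := by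
    intro x
    have h1 : HasDerivAt (fun x : ℝ => a - m * x) (-m) x := by
      simpa using ((hasDerivAt_id x).const_mul m).const_sub a
    have h2 := (((hF (a - m * x)).comp x h1).div_const m).neg
    convert h2 using 1
    · rfl
    · rfl
    field_simp
    · rfl
    field_simp
  have hint : IntervalIntegrable (fun x : ℝ => f (a - m * x)) volume 0 d :=
    (hf.comp (by continuity)).intervalIntegrable 0 d
  rw [intervalIntegral.integral_eq_sub_of_hasDerivAt (fun x _ => key x) hint]
  field_simp
  ring

lemma area_eq {m2 m3 d2 d3 : ℝ} (hm2 : 0 < m2) (hm3 : 0 < m3)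
    (hd2 : 0 < d2) (hd3 : 0 < d3) (t0 : ℝ) :
    volume {p : ℝ × ℝ | p.1 ∈ Set.Icc 0 d2 ∧ p.2 ∈ Set.Icc 0 d3 ∧ m2 * p.1 + m3 * p.2 ≤ t0}
    = ENNReal.ofReal ((sq2 (m3*d3) t0 - sq2 (m3*d3) (t0 - m2*d2)) / (m2 * m3)) := by
  set T : Set (ℝ × ℝ) :=
    {p : ℝ × ℝ | p.1 ∈ Set.Icc 0 d2 ∧ p.2 ∈ Set.Icc 0 d3 ∧ m2 * p.1 + m3 * p.2 ≤ t0} with hT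
  have hTm : MeasurableSet T := by
    have : T = (Set.Icc 0 d2 ×ˢ Set.Icc 0 d3) ∩
        ((fun p : ℝ × ℝ => m2 * p.1 + m3 * p.2) ⁻¹' Set.Iic t0) := by
      ext p; simp only [hT, Set.mem_inter_iff, Set.mem_prod, Set.mem_preimage,
        Set.mem_Iic, Set.mem_setOf_eq]; tauto
    rw [this]
    exact (measurableSet_Icc.prod measurableSet_Icc).inter
      ((by fun_prop : Continuous (fun p : ℝ × ℝ => m2 * p.1 + m3 * p.2)).measurable
        measurableSet_Iic)
  rw [Measure.volume_eq_prod, Measure.prod_apply hTm]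
  have slice : ∀ y : ℝ, volume (Prod.mk y ⁻¹' T)
      = Set.indicator (Set.Icc 0 d2)
          (fun y => ENNReal.ofReal ((1/m3) * ramp (m3*d3) (t0 - m2*y))) y := by
    intro y
    by_cases hy : y ∈ Set.Icc 0 d2
    · rw [Set.indicator_of_mem hy]
      have hpre : Prod.mk y ⁻¹' T = Set.Icc 0 (min d3 ((t0 - m2*y)/m3)) := by
        ext z
        simp only [hT, Set.mem_preimage, Set.mem_setOf_eq, Set.mem_Icc, le_min_iff,
          hy, true_and]
        have hy' := Set.mem_Icc.mp hy
        constructor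
        · rintro ⟨-, ⟨hz0, hz1⟩, hz2⟩
          refine ⟨hz0, hz1, ?_⟩
          rw [le_div_iff₀ hm3]; linarith
        · rintro ⟨hz0, hz1, hz2⟩
          rw [le_div_iff₀ hm3] at hz2
          exact ⟨⟨hy'.1, hy'.2⟩, ⟨hz0, hz1⟩, by linarith⟩
      rw [hpre, Real.volume_Icc]
      rw [ramp_div hm3 hd3.le]
      rw [sub_zero]
      rcases le_total (min d3 ((t0 - m2*y)/m3)) 0 with h | h
      · rw [max_eq_left h, ENNReal.ofReal_zero, ENNReal.ofReal_eq_zero.mpr h]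
      · rw [max_eq_right h]
    · rw [Set.indicator_of_notMem hy]
      have : Prod.mk y ⁻¹' T = ∅ := by
        ext z; simp only [hT, Set.mem_preimage, Set.mem_setOf_eq, Set.mem_empty_iff_false,
          iff_false]
        intro hc; exact hy hc.1
      rw [this, measure_empty]
  rw [lintegral_congr slice, lintegral_indicator measurableSet_Icc _]
  have hcont : Continuous (fun y : ℝ => (1/m3) * ramp (m3*d3) (t0 - m2*y)) := by
    have := ramp_continuous (m3*d3); fun_prop
  rw [← MeasureTheory.ofReal_integral_eq_lintegral_ofReal
    (hcont.integrableOn_Icc)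
    (Filter.Eventually.of_forall (fun y => by
      exact mul_nonneg (by positivity) (ramp_nonneg _ _)))]
  congr 1
  rw [MeasureTheory.integral_Icc_eq_integral_Ioc,
    ← intervalIntegral.integral_of_le hd2.le]
  have hcont0 : Continuous (fun u : ℝ => (1/m3) * ramp (m3*d3) u) := by
    have := ramp_continuous (m3*d3); fun_prop
  have hftc := integral_affine (f := fun u : ℝ => (1/m3) * ramp (m3*d3) u)
    (F := fun u : ℝ => (1/m3) * sq2 (m3*d3) u)
    (fun t => (hasDerivAt_sq2 (m3*d3) (by positivity) t).const_mul (1/m3))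
    hcont0 t0 m2 d2 hm2
  rw [hftc]
  field_simp

lemma F3_eq (y : ℝ) : F3 y = (max y 0) ^ 3 := by
  unfold F3
  rcases lt_or_ge 0 y with h | h
  · rw [if_pos h, max_eq_left h.le]
  · rw [if_neg (not_lt.mpr h), max_eq_right h]
    norm_num

/-- Analytic formula of Scardovelli–Zaleski for the volume of the cut region of a
rectangular hexahedron cell by the plane `m·x = α`. -/
theorem cut_volume_formula (m1 m2 m3 d1 d2 d3 α : ℝ)
    (hm1 : 0 < m1) (hm2 : 0 < m2) (hm3 : 0 < m3)
    (hd1 : 0 < d1) (hd2 : 0 < d2) (hd3 : 0 < d3)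
    (αmax : ℝ) (hαmax : αmax = m1 * d1 + m2 * d2 + m3 * d3)
    (hα0 : 0 ≤ α) (hα1 : α ≤ αmax) :
    volume {p : ℝ × ℝ × ℝ | p.1 ∈ Set.Icc 0 d1 ∧ p.2.1 ∈ Set.Icc 0 d2 ∧
        p.2.2 ∈ Set.Icc 0 d3 ∧ m1 * p.1 + m2 * p.2.1 + m3 * p.2.2 ≤ α} =
      ENNReal.ofReal ((1 / (6 * m1 * m2 * m3)) *
        (α ^ 3
          - (F3 (α - m1 * d1) + F3 (α - m2 * d2) + F3 (α - m3 * d3))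
          + (F3 (α - αmax + m1 * d1) + F3 (α - αmax + m2 * d2) + F3 (α - αmax + m3 * d3)))) := by
  set S : Set (ℝ × ℝ × ℝ) := {p : ℝ × ℝ × ℝ | p.1 ∈ Set.Icc 0 d1 ∧ p.2.1 ∈ Set.Icc 0 d2 ∧
        p.2.2 ∈ Set.Icc 0 d3 ∧ m1 * p.1 + m2 * p.2.1 + m3 * p.2.2 ≤ α} with hS
  have hSm : MeasurableSet S := by
    have : S = (Set.Icc 0 d1 ×ˢ (Set.Icc 0 d2 ×ˢ Set.Icc 0 d3)) ∩
        ((fun p : ℝ × ℝ × ℝ => m1 * p.1 + m2 * p.2.1 + m3 * p.2.2) ⁻¹' Set.Iic α) := by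
      ext p
      simp only [hS, Set.mem_inter_iff, Set.mem_prod, Set.mem_preimage,
        Set.mem_Iic, Set.mem_setOf_eq]
      tauto
    rw [this]
    exact (measurableSet_Icc.prod (measurableSet_Icc.prod measurableSet_Icc)).inter
      ((by fun_prop :
        Continuous (fun p : ℝ × ℝ × ℝ => m1 * p.1 + m2 * p.2.1 + m3 * p.2.2)).measurable
        measurableSet_Iic)
  have hA : ∀ t : ℝ, 0 ≤ (sq2 (m3*d3) t - sq2 (m3*d3) (t - m2*d2)) / (m2 * m3) := by
    intro t
    apply div_nonneg _ (by positivity)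
    rw [sub_nonneg]
    exact sq2_mono (m3*d3) (by positivity) (by nlinarith)
  rw [Measure.volume_eq_prod, Measure.prod_apply hSm]
  have slice : ∀ x : ℝ, volume (Prod.mk x ⁻¹' S)
      = Set.indicator (Set.Icc 0 d1)
          (fun x => ENNReal.ofReal
            ((sq2 (m3*d3) (α - m1*x) - sq2 (m3*d3) ((α - m1*x) - m2*d2)) / (m2 * m3))) x := by
    intro x
    by_cases hx : x ∈ Set.Icc 0 d1
    · rw [Set.indicator_of_mem hx]
      have hpre : Prod.mk x ⁻¹' S
          = {p : ℝ × ℝ | p.1 ∈ Set.Icc 0 d2 ∧ p.2 ∈ Set.Icc 0 d3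
              ∧ m2 * p.1 + m3 * p.2 ≤ α - m1*x} := by
        ext p
        simp only [hS, Set.mem_preimage, Set.mem_setOf_eq]
        constructor
        · rintro ⟨-, h2, h3, h4⟩
          exact ⟨h2, h3, by linarith⟩
        · rintro ⟨h2, h3, h4⟩
          exact ⟨hx, h2, h3, by linarith⟩
      rw [hpre, area_eq hm2 hm3 hd2 hd3]
    · rw [Set.indicator_of_notMem hx]
      have : Prod.mk x ⁻¹' S = ∅ := by
        ext p
        simp only [hS, Set.mem_preimage, Set.mem_setOf_eq, Set.mem_empty_iff_false, iff_false]
        intro hc; exact hx hc.1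
      rw [this, measure_empty]
  rw [lintegral_congr slice, lintegral_indicator measurableSet_Icc _]
  have hcont0 : Continuous
      (fun t : ℝ => (sq2 (m3*d3) t - sq2 (m3*d3) (t - m2*d2)) / (m2 * m3)) := by
    have := sq2_continuous (m3*d3); fun_prop
  have hcont : Continuous (fun x : ℝ =>
      (sq2 (m3*d3) (α - m1*x) - sq2 (m3*d3) ((α - m1*x) - m2*d2)) / (m2 * m3)) := by
    have := sq2_continuous (m3*d3); fun_prop
  rw [← MeasureTheory.ofReal_integral_eq_lintegral_ofReal
    (hcont.integrableOn_Icc)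
    (Filter.Eventually.of_forall (fun x => hA (α - m1*x)))]
  congr 1
  rw [MeasureTheory.integral_Icc_eq_integral_Ioc, ← intervalIntegral.integral_of_le hd1.le]
  have hK : ∀ t : ℝ, HasDerivAt
      (fun t : ℝ => (cb6 (m3*d3) t - cb6 (m3*d3) (t - m2*d2)) / (m2 * m3))
      ((sq2 (m3*d3) t - sq2 (m3*d3) (t - m2*d2)) / (m2 * m3)) t := by
    intro t
    have h2 : HasDerivAt (fun t : ℝ => cb6 (m3*d3) (t - m2*d2)) (sq2 (m3*d3) (t - m2*d2)) t := by
      have := (hasDerivAt_cb6 (m3*d3) (t - m2*d2)).comp t ((hasDerivAt_id t).sub_const (m2*d2))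
      exact HasDerivAt.comp_sub_const t (m2*d2) (hasDerivAt_cb6 (m3*d3) (t - m2*d2))
    exact ((hasDerivAt_cb6 (m3*d3) t).sub h2).div_const (m2*m3)
  have hftc := integral_affine
    (f := fun t : ℝ => (sq2 (m3*d3) t - sq2 (m3*d3) (t - m2*d2)) / (m2 * m3))
    (F := fun t : ℝ => (cb6 (m3*d3) t - cb6 (m3*d3) (t - m2*d2)) / (m2 * m3))
    hK hcont0 α m1 d1 hm1
  rw [hftc]
  -- now pure algebra
  simp only [cb6, F3_eq]
  have h1 : max α 0 = α := max_eq_left hα0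
  have h4 : α - αmax + m1 * d1 = α - m2 * d2 - m3 * d3 := by rw [hαmax]; ring
  have h5 : α - αmax + m2 * d2 = α - m1 * d1 - m3 * d3 := by rw [hαmax]; ring
  have h6 : α - αmax + m3 * d3 = α - m1 * d1 - m2 * d2 := by rw [hαmax]; ring
  have h8 : max (α - m1 * d1 - m2 * d2 - m3 * d3) 0 = 0 := by
    apply max_eq_right
    rw [hαmax] at hα1; linarith
  rw [h4, h5, h6]
  ring_nf
  rw [show α - m1 * d1 - m2 * d2 - m3 * d3
      = α - m1*d1 - m2*d2 - m3*d3 from rfl] at h8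
  ring_nf at h8 ⊢
  rw [h8, h1]
  ring
end

section
/- Let m1, m2 > 0, let Δx1, Δx2 > 0, set α_max = m1·Δx1 + m2·Δx2, and let 0 ≤ α ≤ α_max. Then the two-dimensional Lebesgue measure of the cut region {(x, y) ∈ [0,Δx1]×[0,Δx2] : m1·x + m2·y ≤ α} equals (1/(2·m1·m2))·[α² − F₂(α − m1·Δx1) − F₂(α − m2·Δx2)]. -/
open MeasureTheory

/-- Truncated square function: `F₂ y = y²` for `y > 0`, else `0`. -/
noncomputable def F2 (y : ℝ) : ℝ := if 0 < y then y ^ 2 else 0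

lemma F2_of_nonpos {y : ℝ} (h : y ≤ 0) : F2 y = 0 := if_neg (not_lt.2 h)

lemma F2_of_nonneg {y : ℝ} (h : 0 ≤ y) : F2 y = y ^ 2 := by
  rcases h.lt_or_eq with h | h
  · exact if_pos h
  · simp [F2, ← h]

lemma F2_hasDerivAt (y : ℝ) : HasDerivAt F2 (2 * max 0 y) y := by
  rcases lt_trichotomy y 0 with hy | rfl | hy
  · have he : F2 =ᶠ[nhds y] fun _ => (0:ℝ) := by
      filter_upwards [Iio_mem_nhds hy] with z hz
      exact F2_of_nonpos hz.le
    simpa [max_eq_left hy.le] using (hasDerivAt_const y (0:ℝ)).congr_of_eventuallyEq he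
  · rw [hasDerivAt_iff_tendsto]
    have hb : ∀ x : ℝ, ‖x - 0‖⁻¹ * ‖F2 x - F2 0 - (x - 0) • (2 * max 0 0)‖ ≤ |x| := by
      intro x
      rcases eq_or_ne x 0 with rfl | hx
      · simp
      · have h1 : ‖F2 x - F2 0 - (x - 0) • (2 * max 0 0)‖ = |F2 x| := by
          simp [F2_of_nonpos le_rfl]
        have h2 : |F2 x| ≤ |x| * |x| := by
          rcases le_or_gt x 0 with h | h
          · simp [F2_of_nonpos h, mul_self_nonneg, abs_nonneg, mul_nonneg]
          · rw [F2_of_nonneg h.le, abs_of_nonneg (sq_nonneg x), sq, abs_of_pos h]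
        have hx' : (0:ℝ) < |x| := abs_pos.2 hx
        rw [h1]
        calc ‖x - 0‖⁻¹ * |F2 x| ≤ |x|⁻¹ * (|x| * |x|) := by
              simp only [sub_zero, Real.norm_eq_abs]
              exact mul_le_mul_of_nonneg_left h2 (by positivity)
          _ = |x| := by field_simp
    have := squeeze_zero (fun x => by positivity) hb
      (by simpa using (continuous_abs.tendsto (0:ℝ)))
    simpa using this
  · have he : F2 =ᶠ[nhds y] fun z => z ^ 2 := by
      filter_upwards [Ioi_mem_nhds hy] with z hz
      exact if_pos hz
    have h0 : HasDerivAt (fun z : ℝ => z ^ 2) (2 * y) y := by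
      simpa using hasDerivAt_pow 2 y
    simpa [max_eq_right hy.le] using h0.congr_of_eventuallyEq he

lemma max_min_split {a b : ℝ} (ha : 0 ≤ a) :
    max 0 (min a b) = max 0 b - max 0 (b - a) := by
  rcases le_total b 0 with h | h
  · rw [max_eq_left (le_trans (min_le_right a b) h), max_eq_left h,
      max_eq_left (by linarith)]
    ring
  · rcases le_total b a with h2 | h2
    · rw [min_eq_right h2, max_eq_right h, max_eq_left (by linarith)]
      ring
    · rw [min_eq_left h2, max_eq_right ha, max_eq_right h, max_eq_right (by linarith)]
      ring

lemma cut_integral_eq (m1 m2 d1 d2 α : ℝ)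
    (hm1 : 0 < m1) (hm2 : 0 < m2) (hd2 : 0 < d2)
    (αmax : ℝ) (hαmax : αmax = m1 * d1 + m2 * d2)
    (hα0 : 0 ≤ α) (hα1 : α ≤ αmax) :
    ∫ x in (0:ℝ)..d1, max 0 (min d2 ((α - m1 * x) / m2)) =
    (1 / (2 * m1 * m2)) * (α ^ 2 - F2 (α - m1 * d1) - F2 (α - m2 * d2)) := by
  set H : ℝ → ℝ := fun x =>
    (F2 (α - m1 * x - m2 * d2) - F2 (α - m1 * x)) / (2 * m1 * m2) with hH
  have hderiv : ∀ x ∈ Set.uIcc (0:ℝ) d1,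
      HasDerivAt H (max 0 (min d2 ((α - m1 * x) / m2))) x := by
    intro x _
    have hu1 : HasDerivAt (fun x : ℝ => α - m1 * x) (-m1) x := by
      simpa using ((hasDerivAt_id x).const_mul m1).const_sub α
    have hu2 : HasDerivAt (fun x : ℝ => α - m1 * x - m2 * d2) (-m1) x := by
      simpa using hu1.sub_const (m2 * d2)
    have h1 : HasDerivAt (fun x : ℝ => F2 (α - m1 * x))
        (2 * max 0 (α - m1 * x) * (-m1)) x :=
      by have := (F2_hasDerivAt (α - m1 * x)).comp x hu1; exact this
    have h2 : HasDerivAt (fun x : ℝ => F2 (α - m1 * x - m2 * d2))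
        (2 * max 0 (α - m1 * x - m2 * d2) * (-m1)) x :=
      by have := (F2_hasDerivAt (α - m1 * x - m2 * d2)).comp x hu2; exact this
    have h3 := (h2.sub h1).div_const (2 * m1 * m2)
    refine h3.congr_deriv ?_
    symm
    rw [max_min_split hd2.le]
    have e1 : max 0 ((α - m1 * x) / m2) = max 0 (α - m1 * x) / m2 := by
      rw [← max_div_div_right hm2.le]; simp
    have e2 : (α - m1 * x) / m2 - d2 = (α - m1 * x - m2 * d2) / m2 := by
      field_simp
    have e3 : max 0 ((α - m1 * x - m2 * d2) / m2) = max 0 (α - m1 * x - m2 * d2) / m2 := by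
      rw [← max_div_div_right hm2.le]; simp
    rw [e1, e2, e3]
    field_simp
    ring
  have hcont : Continuous fun x : ℝ => max 0 (min d2 ((α - m1 * x) / m2)) := by
    fun_prop
  have := intervalIntegral.integral_eq_sub_of_hasDerivAt hderiv
    (hcont.intervalIntegrable 0 d1)
  rw [this, hH]
  have hz : F2 (α - m1 * d1 - m2 * d2) = 0 :=
    F2_of_nonpos (by rw [hαmax] at hα1; linarith)
  have ha : F2 (α - m1 * 0) = α ^ 2 := by
    rw [mul_zero, sub_zero, F2_of_nonneg hα0]
  have hb : F2 (α - m1 * 0 - m2 * d2) = F2 (α - m2 * d2) := by norm_num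
  simp only [hz, ha, hb]
  field_simp
  ring

/-- Analytic formula for the area of the cut region of a rectangular cell by the
line `m1·x + m2·y = α`. -/
theorem cut_area_formula (m1 m2 d1 d2 α : ℝ)
    (hm1 : 0 < m1) (hm2 : 0 < m2) (hd1 : 0 < d1) (hd2 : 0 < d2)
    (αmax : ℝ) (hαmax : αmax = m1 * d1 + m2 * d2)
    (hα0 : 0 ≤ α) (hα1 : α ≤ αmax) :
    volume {p : ℝ × ℝ | p.1 ∈ Set.Icc 0 d1 ∧ p.2 ∈ Set.Icc 0 d2 ∧
        m1 * p.1 + m2 * p.2 ≤ α} =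
      ENNReal.ofReal ((1 / (2 * m1 * m2)) *
        (α ^ 2 - F2 (α - m1 * d1) - F2 (α - m2 * d2))) := by
  set S : Set (ℝ × ℝ) := {p : ℝ × ℝ | p.1 ∈ Set.Icc 0 d1 ∧ p.2 ∈ Set.Icc 0 d2 ∧
      m1 * p.1 + m2 * p.2 ≤ α} with hSdef
  set g : ℝ → ℝ := fun x => max 0 (min d2 ((α - m1 * x) / m2)) with hgdef
  have hgcont : Continuous g := by fun_prop
  have hSm : MeasurableSet S := by
    have : S = (Prod.fst ⁻¹' Set.Icc 0 d1) ∩ ((Prod.snd ⁻¹' Set.Icc 0 d2) ∩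
        {p : ℝ × ℝ | m1 * p.1 + m2 * p.2 ≤ α}) := rfl
    rw [this]
    exact (measurable_fst measurableSet_Icc).inter
      ((measurable_snd measurableSet_Icc).inter
        (measurableSet_le (by fun_prop) measurable_const))
  have hslice : ∀ x : ℝ, volume (Prod.mk x ⁻¹' S) =
      (Set.Icc 0 d1).indicator (fun x => ENNReal.ofReal (g x)) x := by
    intro x
    by_cases hx : x ∈ Set.Icc (0:ℝ) d1
    · rw [Set.indicator_of_mem hx]
      have hpre : Prod.mk x ⁻¹' S = Set.Icc 0 (min d2 ((α - m1 * x) / m2)) := by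
        ext y
        constructor
        · rintro ⟨-, hy01, hy2⟩
          obtain ⟨hy0, hy1⟩ := Set.mem_Icc.1 hy01
          exact Set.mem_Icc.2 ⟨hy0, le_min hy1 (by rw [le_div_iff₀ hm2]; linarith)⟩
        · intro hy
          obtain ⟨hy0, hy1⟩ := Set.mem_Icc.1 hy
          obtain ⟨hy1a, hy1b⟩ := le_min_iff.1 hy1
          rw [le_div_iff₀ hm2] at hy1b
          exact ⟨hx, Set.mem_Icc.2 ⟨hy0, hy1a⟩, by linarith⟩
      rw [hpre, Real.volume_Icc]
      rcases le_total (min d2 ((α - m1 * x) / m2)) 0 with h | h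
      · rw [hgdef]
        simp only
        rw [max_eq_left h, ENNReal.ofReal_of_nonpos (by linarith), ENNReal.ofReal_zero]
      · rw [hgdef]
        simp only
        rw [max_eq_right h, sub_zero]
    · rw [Set.indicator_of_notMem hx]
      have h0 : Prod.mk x ⁻¹' S = ∅ :=
        Set.eq_empty_of_forall_notMem (fun y hy => hx hy.1)
      rw [h0, measure_empty]
  rw [Measure.volume_eq_prod ℝ ℝ, Measure.prod_apply hSm]
  rw [lintegral_congr hslice]
  rw [lintegral_indicator measurableSet_Icc]
  have hint : IntegrableOn g (Set.Icc 0 d1) volume := hgcont.integrableOn_Icc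
  have hnn : 0 ≤ᵐ[volume.restrict (Set.Icc (0:ℝ) d1)] g :=
    Filter.Eventually.of_forall (fun x => le_max_left _ _)
  rw [← ofReal_integral_eq_lintegral_ofReal hint hnn]
  rw [MeasureTheory.integral_Icc_eq_integral_Ioc,
    ← intervalIntegral.integral_of_le hd1.le]
  rw [cut_integral_eq m1 m2 d1 d2 α hm1 hm2 hd2 αmax hαmax hα0 hα1]
end

section
/- Let 0 < m1 ≤ m2 ≤ m3 with m1 + m2 + m3 = 1, and let 0 < α ≤ m1. Let S(α) = {x ∈ [0,1]³ : m1·x1 + m2·x2 + m3·x3 ≤ α}. Then for each j ∈ {1,2,3}, the j-th coordinate of the centroid of S(α), namely (∫_{S(α)} x_j dλ)/λ(S(α)), equals α/(4·m_j). -/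
open MeasureTheory Set


lemma maxpow_nonpos {u : ℝ} (hu : u ≤ 0) {n : ℕ} (hn : n ≠ 0) : max u 0 ^ n = 0 := by
  rw [max_eq_right hu]; exact zero_pow hn

lemma mul_maxpow (u : ℝ) (n : ℕ) : u * max u 0 ^ (n+1) = max u 0 ^ (n+2) := by
  rcases le_or_gt u 0 with h | h
  · rw [max_eq_right h]; simp
  · rw [max_eq_left h.le]; ring

lemma hasDerivAt_maxpow (n : ℕ) (u : ℝ) :
    HasDerivAt (fun v : ℝ => max v 0 ^ (n+2)) ((n+2) * max u 0 ^ (n+1)) u := by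
  rcases lt_trichotomy u 0 with h | h | h
  · have hev : (fun v : ℝ => max v 0 ^ (n+2)) =ᶠ[nhds u] fun _ => (0:ℝ) := by
      filter_upwards [Iio_mem_nhds h] with v hv
      exact maxpow_nonpos (le_of_lt hv) (by omega)
    have h0 : HasDerivAt (fun _ : ℝ => (0:ℝ)) 0 u := hasDerivAt_const u 0
    have := h0.congr_of_eventuallyEq hev
    simpa [maxpow_nonpos h.le (show n+1 ≠ 0 by omega)] using this
  · subst h
    rw [hasDerivAt_iff_isLittleO]
    have hsimp : ∀ x' : ℝ, max x' 0 ^ (n+2) - max (0:ℝ) 0 ^ (n+2)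
        - x' * ((↑n+2) * max (0:ℝ) 0 ^ (n+1)) = max x' 0 ^ (n+2) := by
      intro x'
      rw [max_self, zero_pow (by omega : n+2 ≠ 0), zero_pow (by omega : n+1 ≠ 0)]
      ring
    simp only [smul_eq_mul, sub_zero, hsimp]
    have h1 : (fun v : ℝ => max v 0 ^ (n+2)) =O[nhds 0] fun v => v ^ (n+2) := by
      apply Asymptotics.isBigO_of_le
      intro v
      rcases le_or_gt v 0 with hv | hv
      · rw [maxpow_nonpos hv (by omega)]; simp
      · rw [max_eq_left hv.le]
    exact h1.trans_isLittleO (Asymptotics.isLittleO_pow_id (by omega))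
  · have hev : (fun v : ℝ => max v 0 ^ (n+2)) =ᶠ[nhds u] fun v => v ^ (n+2) := by
      filter_upwards [Ioi_mem_nhds h] with v hv
      rw [max_eq_left (le_of_lt hv)]
    have hp : HasDerivAt (fun v : ℝ => v ^ (n+2)) ((n+2) * u ^ (n+1)) u := by
      simpa using hasDerivAt_pow (n+2) u
    have := hp.congr_of_eventuallyEq hev
    simpa [max_eq_left h.le] using this

lemma continuous_maxpow (n : ℕ) : Continuous (fun v : ℝ => max v 0 ^ n) := by
  fun_prop

/-- key 1D integral: y ↦ max (s - c*y) 0 ^ (n+1) over [0,1], assuming s ≤ c. -/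
lemma integral_maxpow_comp (c s : ℝ) (hc : 0 < c) (hsc : s ≤ c) (n : ℕ) :
    ∫ y in (0:ℝ)..1, max (s - c*y) 0 ^ (n+1) = max s 0 ^ (n+2) / (c*(n+2)) := by
  have hcn : (c*((n:ℝ)+2)) ≠ 0 := by positivity
  have hder : ∀ y ∈ Set.uIcc (0:ℝ) 1,
      HasDerivAt (fun y : ℝ => -(max (s - c*y) 0 ^ (n+2) / (c*(n+2))))
        (max (s - c*y) 0 ^ (n+1)) y := by
    intro y _
    have h1 : HasDerivAt (fun y : ℝ => s - c*y) (-c) y := by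
      simpa using ((hasDerivAt_id y).const_mul c).const_sub s
    have h2 := (hasDerivAt_maxpow n (s - c*y)).comp y h1
    have h3 := (h2.div_const (c*(n+2))).neg
    have hkey : -(((n:ℝ)+2) * max (s - c*y) 0 ^ (n+1) * -c / (c*((n:ℝ)+2)))
        = max (s - c*y) 0 ^ (n+1) := by
      field_simp
    have h4 : (fun x => -(((fun v : ℝ => max v 0 ^ (n+2)) ∘ fun y : ℝ => s - c*y) x / (c*(n+2))))
        = fun y : ℝ => -(max (s - c*y) 0 ^ (n+2) / (c*(n+2))) := rfl
    rw [hkey] at h3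
    exact h3
  rw [intervalIntegral.integral_eq_sub_of_hasDerivAt hder]
  · have h1 : s - c*1 ≤ 0 := by linarith
    rw [maxpow_nonpos h1 (by omega : n+2 ≠ 0)]
    simp [mul_comm]
  · exact ((continuous_maxpow (n+1)).comp (by continuity)).intervalIntegrable 0 1

lemma setInt_Icc_const (b : ℝ) : ∫ _z in Icc (0:ℝ) b, (1:ℝ) = max b 0 := by
  rw [setIntegral_const, measureReal_def, Real.volume_Icc]
  simp [ENNReal.toReal_ofReal', max_comm]

lemma setInt_Icc_id (b : ℝ) : ∫ z in Icc (0:ℝ) b, z = max b 0 ^ 2 / 2 := by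
  rcases le_or_gt b 0 with h | h
  · have h0 : volume (Icc (0:ℝ) b) = 0 := by
      rw [Real.volume_Icc]
      simp [ENNReal.ofReal_eq_zero]; linarith
    rw [show (volume.restrict (Icc (0:ℝ) b)) = 0 from Measure.restrict_eq_zero.2 h0,
      integral_zero_measure, maxpow_nonpos h (by omega)]
    norm_num
  · rw [integral_Icc_eq_integral_Ioc, ← intervalIntegral.integral_of_le h.le, integral_id,
      max_eq_left h.le]
    norm_num

lemma fubini2 (c2 c3 s : ℝ) (h2 : 0 < c2) (h23 : c2 ≤ c3) (hs2 : s ≤ c2)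
    (g : ℝ × ℝ → ℝ) (hg : Continuous g) :
    ∫ q in {q : ℝ × ℝ | q.1 ∈ Icc (0:ℝ) 1 ∧ q.2 ∈ Icc (0:ℝ) 1 ∧ c2 * q.1 + c3 * q.2 ≤ s}, g q
      = ∫ y in Icc (0:ℝ) 1, ∫ z in Icc (0:ℝ) ((s - c2*y)/c3), g (y, z) := by
  have h3 : 0 < c3 := lt_of_lt_of_le h2 h23
  set T : Set (ℝ × ℝ) := {q : ℝ × ℝ | q.1 ∈ Icc (0:ℝ) 1 ∧ q.2 ∈ Icc (0:ℝ) 1 ∧ c2 * q.1 + c3 * q.2 ≤ s} with hT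
  have hclosed : IsClosed T := by
    have : T = (Prod.fst ⁻¹' Icc (0:ℝ) 1) ∩ ((Prod.snd ⁻¹' Icc (0:ℝ) 1) ∩
        {q : ℝ × ℝ | c2 * q.1 + c3 * q.2 ≤ s}) := rfl
    rw [this]
    exact (isClosed_Icc.preimage continuous_fst).inter
      ((isClosed_Icc.preimage continuous_snd).inter
        (isClosed_le (by fun_prop) continuous_const))
  have hmeas : MeasurableSet T := hclosed.measurableSet
  have hsub : T ⊆ Icc ((0:ℝ), (0:ℝ)) (1, 1) := by
    intro q hq
    obtain ⟨h1, hh2, -⟩ := hq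
    simp only [Set.mem_Icc, Prod.le_def] at *
    exact ⟨⟨h1.1, hh2.1⟩, h1.2, hh2.2⟩
  have hcomp : IsCompact T := IsCompact.of_isClosed_subset isCompact_Icc hclosed hsub
  have hint : IntegrableOn g T := hg.continuousOn.integrableOn_compact hcomp
  have hind : Integrable (T.indicator g) (volume.prod volume) := by
    rw [← Measure.volume_eq_prod]
    exact (integrable_indicator_iff hmeas).2 hint
  rw [← integral_indicator hmeas, Measure.volume_eq_prod ℝ ℝ, integral_prod _ hind]
  have hfun : (fun y => ∫ z, T.indicator g (y, z)) =
      (Icc (0:ℝ) 1).indicator (fun y => ∫ z in Icc (0:ℝ) ((s - c2*y)/c3), g (y, z)) := by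
    funext y
    by_cases hy : y ∈ Icc (0:ℝ) 1
    · rw [indicator_of_mem hy]
      have hiff : ∀ z : ℝ, (y, z) ∈ T ↔ z ∈ Icc (0:ℝ) ((s - c2*y)/c3) := by
        intro z
        simp only [hT, mem_setOf_eq, mem_Icc] at *
        constructor
        · rintro ⟨-, ⟨hz0, -⟩, hle⟩
          exact ⟨hz0, by rw [le_div_iff₀ h3]; linarith⟩
        · rintro ⟨hz0, hzle⟩
          rw [le_div_iff₀ h3] at hzle
          refine ⟨hy, ⟨hz0, ?_⟩, by linarith⟩
          have hy0 : 0 ≤ y := hy.1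
          nlinarith
      have hptw : (fun z => T.indicator g (y, z)) =
          (Icc (0:ℝ) ((s - c2*y)/c3)).indicator (fun z => g (y, z)) := by
        funext z
        by_cases hz : z ∈ Icc (0:ℝ) ((s - c2*y)/c3)
        · rw [indicator_of_mem hz, indicator_of_mem ((hiff z).2 hz)]
        · rw [indicator_of_notMem hz, indicator_of_notMem (fun h => hz ((hiff z).1 h))]
      rw [hptw, integral_indicator measurableSet_Icc]
    · rw [indicator_of_notMem hy]
      have : ∀ z : ℝ, T.indicator g (y, z) = 0 := by
        intro z
        exact indicator_of_notMem (fun h => hy h.1) g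
      simp [this]
  rw [hfun, integral_indicator measurableSet_Icc]

lemma fubini3 (m1 m2 m3 α : ℝ) (hm1 : 0 < m1) (hm12 : m1 ≤ m2) (hm23 : m2 ≤ m3)
    (hα1 : α ≤ m1) (S : Set (ℝ × ℝ × ℝ))
    (hS : S = {p : ℝ × ℝ × ℝ | p.1 ∈ Set.Icc 0 1 ∧ p.2.1 ∈ Set.Icc 0 1 ∧
        p.2.2 ∈ Set.Icc 0 1 ∧ m1 * p.1 + m2 * p.2.1 + m3 * p.2.2 ≤ α})
    (f : ℝ × ℝ × ℝ → ℝ) (hf : Continuous f) :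
    ∫ p in S, f p = ∫ x in Icc (0:ℝ) 1, ∫ y in Icc (0:ℝ) 1,
      ∫ z in Icc (0:ℝ) ((α - m1*x - m2*y)/m3), f (x, y, z) := by
  have hm2 : 0 < m2 := lt_of_lt_of_le hm1 hm12
  have hm3 : 0 < m3 := lt_of_lt_of_le hm2 hm23
  have hclosed : IsClosed S := by
    rw [hS]
    have : {p : ℝ × ℝ × ℝ | p.1 ∈ Set.Icc 0 1 ∧ p.2.1 ∈ Set.Icc 0 1 ∧
        p.2.2 ∈ Set.Icc 0 1 ∧ m1 * p.1 + m2 * p.2.1 + m3 * p.2.2 ≤ α} =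
        (Prod.fst ⁻¹' Icc (0:ℝ) 1) ∩ (((fun p : ℝ × ℝ × ℝ => p.2.1) ⁻¹' Icc (0:ℝ) 1) ∩
          (((fun p : ℝ × ℝ × ℝ => p.2.2) ⁻¹' Icc (0:ℝ) 1) ∩
            {p : ℝ × ℝ × ℝ | m1 * p.1 + m2 * p.2.1 + m3 * p.2.2 ≤ α})) := rfl
    rw [this]
    exact (isClosed_Icc.preimage continuous_fst).inter
      ((isClosed_Icc.preimage (by fun_prop)).inter
        ((isClosed_Icc.preimage (by fun_prop)).inter (isClosed_le (by fun_prop) continuous_const)))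
  have hmeas : MeasurableSet S := hclosed.measurableSet
  have hsub : S ⊆ Icc ((0:ℝ), (0:ℝ), (0:ℝ)) (1, 1, 1) := by
    intro p hp
    rw [hS] at hp
    obtain ⟨h1, h2, h3, -⟩ := hp
    simp only [Set.mem_Icc, Prod.le_def] at *
    exact ⟨⟨h1.1, h2.1, h3.1⟩, h1.2, h2.2, h3.2⟩
  have hcomp : IsCompact S := IsCompact.of_isClosed_subset isCompact_Icc hclosed hsub
  have hint : IntegrableOn f S := hf.continuousOn.integrableOn_compact hcomp
  have hind : Integrable (S.indicator f) ((volume : Measure ℝ).prod (volume : Measure (ℝ × ℝ))) := by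
    rw [← Measure.volume_eq_prod]
    exact (integrable_indicator_iff hmeas).2 hint
  rw [← integral_indicator hmeas, Measure.volume_eq_prod ℝ (ℝ × ℝ), integral_prod _ hind]
  have hfun : (fun x => ∫ q : ℝ × ℝ, S.indicator f (x, q)) =
      (Icc (0:ℝ) 1).indicator (fun x =>
        ∫ q in {q : ℝ × ℝ | q.1 ∈ Icc (0:ℝ) 1 ∧ q.2 ∈ Icc (0:ℝ) 1 ∧
          m2 * q.1 + m3 * q.2 ≤ α - m1*x}, f (x, q)) := by
    funext x
    by_cases hx : x ∈ Icc (0:ℝ) 1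
    · rw [indicator_of_mem hx]
      set T : Set (ℝ × ℝ) := {q : ℝ × ℝ | q.1 ∈ Icc (0:ℝ) 1 ∧ q.2 ∈ Icc (0:ℝ) 1 ∧
          m2 * q.1 + m3 * q.2 ≤ α - m1*x} with hT
      have hTmeas : MeasurableSet T := by
        have : T = ((fun q : ℝ × ℝ => q.1) ⁻¹' Icc (0:ℝ) 1) ∩
            (((fun q : ℝ × ℝ => q.2) ⁻¹' Icc (0:ℝ) 1) ∩
              {q : ℝ × ℝ | m2 * q.1 + m3 * q.2 ≤ α - m1*x}) := rfl
        rw [this]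
        exact ((isClosed_Icc.preimage continuous_fst).inter
          ((isClosed_Icc.preimage continuous_snd).inter
            (isClosed_le (by fun_prop) continuous_const))).measurableSet
      have hiff : ∀ q : ℝ × ℝ, (x, q) ∈ S ↔ q ∈ T := by
        intro q
        rw [hS, hT]
        simp only [mem_setOf_eq]
        constructor
        · rintro ⟨-, hy, hz, hle⟩
          exact ⟨hy, hz, by linarith⟩
        · rintro ⟨hy, hz, hle⟩
          exact ⟨hx, hy, hz, by linarith⟩
      have hptw : (fun q : ℝ × ℝ => S.indicator f (x, q)) =
          T.indicator (fun q => f (x, q)) := by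
        funext q
        by_cases hq : q ∈ T
        · rw [indicator_of_mem hq, indicator_of_mem ((hiff q).2 hq)]
        · rw [indicator_of_notMem hq, indicator_of_notMem (fun h => hq ((hiff q).1 h))]
      rw [hptw, integral_indicator hTmeas]
    · rw [indicator_of_notMem hx]
      have : ∀ q : ℝ × ℝ, S.indicator f (x, q) = 0 := by
        intro q
        refine indicator_of_notMem (fun h => hx ?_) f
        rw [hS] at h
        exact h.1
      simp [this]
  rw [hfun, integral_indicator measurableSet_Icc]
  apply setIntegral_congr_fun measurableSet_Icc
  intro x hx
  have hs2 : α - m1*x ≤ m2 := by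
    have : 0 ≤ m1 * x := mul_nonneg hm1.le hx.1
    linarith
  exact fubini2 m2 m3 (α - m1*x) hm2 hm23 hs2 (fun q => f (x, q)) (by fun_prop)

lemma maxdiv (u c : ℝ) (hc : 0 < c) : max (u/c) 0 = max u 0 / c := by
  rcases le_or_gt u 0 with h | h
  · rw [max_eq_right (div_nonpos_of_nonpos_of_nonneg h hc.le), max_eq_right h, zero_div]
  · rw [max_eq_left (div_pos h hc).le, max_eq_left h.le]

lemma setInt_Icc_constc (b c : ℝ) : ∫ _z in Icc (0:ℝ) b, c = max b 0 * c := by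
  rw [setIntegral_const, measureReal_def, Real.volume_Icc]
  simp [ENNReal.toReal_ofReal', max_comm]

/-- middle integral, area version -/
lemma J1 (c2 c3 s : ℝ) (h2 : 0 < c2) (h3 : 0 < c3) (hs2 : s ≤ c2) :
    ∫ y in Icc (0:ℝ) 1, max ((s - c2*y)/c3) 0 = max s 0 ^ 2 / (2*c2*c3) := by
  rw [integral_Icc_eq_integral_Ioc, ← intervalIntegral.integral_of_le zero_le_one]
  have h : (fun y => max ((s - c2*y)/c3) 0) = fun y => (max (s - c2*y) 0 ^ (0+1)) * (1/c3) := by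
    funext y; rw [maxdiv _ _ h3, pow_one]; ring
  rw [h, intervalIntegral.integral_mul_const, integral_maxpow_comp c2 s h2 hs2 0]
  norm_num
  ring
lemma Jy (c2 c3 s : ℝ) (h2 : 0 < c2) (h3 : 0 < c3) (hs2 : s ≤ c2) :
    ∫ y in Icc (0:ℝ) 1, max ((s - c2*y)/c3) 0 * y = max s 0 ^ 3 / (6*c2^2*c3) := by
  rw [integral_Icc_eq_integral_Ioc, ← intervalIntegral.integral_of_le zero_le_one]
  have h : (fun y => max ((s - c2*y)/c3) 0 * y)
      = fun y => (s * max (s - c2*y) 0 ^ (0+1) - max (s - c2*y) 0 ^ (1+1)) * (1/(c2*c3)) := by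
    funext y
    rw [maxdiv _ _ h3]
    rcases le_or_gt (s - c2*y) 0 with h | h
    · rw [max_eq_right h]
      norm_num
    · rw [max_eq_left h.le, pow_one]
      field_simp
      ring
  rw [h, intervalIntegral.integral_mul_const, intervalIntegral.integral_sub,
    intervalIntegral.integral_const_mul, integral_maxpow_comp c2 s h2 hs2 0,
    integral_maxpow_comp c2 s h2 hs2 1]
  · push_cast
    have hmul : s * max s 0 ^ 2 = max s 0 ^ 3 := by
      have := mul_maxpow s 1; norm_num at this; exact this
    rw [show s * (max s 0 ^ 2 / (c2 * (0 + 2))) = s * max s 0 ^ 2 / (c2 * (0+2)) from by ring,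
      hmul]
    ring
  · exact (continuous_const.mul ((continuous_maxpow 1).comp (by continuity))).intervalIntegrable 0 1
  · exact ((continuous_maxpow 2).comp (by continuity)).intervalIntegrable 0 1
lemma Jz (c2 c3 s : ℝ) (h2 : 0 < c2) (h3 : 0 < c3) (hs2 : s ≤ c2) :
    ∫ y in Icc (0:ℝ) 1, max ((s - c2*y)/c3) 0 ^ 2 / 2 = max s 0 ^ 3 / (6*c2*c3^2) := by
  rw [integral_Icc_eq_integral_Ioc, ← intervalIntegral.integral_of_le zero_le_one]
  have h : (fun y => max ((s - c2*y)/c3) 0 ^ 2 / 2)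
      = fun y => (max (s - c2*y) 0 ^ (1+1)) * (1/(2*c3^2)) := by
    funext y; rw [maxdiv _ _ h3, div_pow]; ring
  rw [h, intervalIntegral.integral_mul_const, integral_maxpow_comp c2 s h2 hs2 1]
  push_cast
  ring

/-- outer integrals -/
lemma K2 (m1 α : ℝ) (hm1 : 0 < m1) (hα1 : α ≤ m1) :
    ∫ x in Icc (0:ℝ) 1, max (α - m1*x) 0 ^ 2 = max α 0 ^ 3 / (3*m1) := by
  rw [integral_Icc_eq_integral_Ioc, ← intervalIntegral.integral_of_le zero_le_one,
    (integral_maxpow_comp m1 α hm1 hα1 1 : ∫ y in (0:ℝ)..1, max (α - m1*y) 0 ^ 2 = _)]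
  push_cast; ring
lemma K3 (m1 α : ℝ) (hm1 : 0 < m1) (hα1 : α ≤ m1) :
    ∫ x in Icc (0:ℝ) 1, max (α - m1*x) 0 ^ 3 = max α 0 ^ 4 / (4*m1) := by
  rw [integral_Icc_eq_integral_Ioc, ← intervalIntegral.integral_of_le zero_le_one,
    (integral_maxpow_comp m1 α hm1 hα1 2 : ∫ y in (0:ℝ)..1, max (α - m1*y) 0 ^ 3 = _)]
  push_cast; ring
lemma Kx (m1 α : ℝ) (hm1 : 0 < m1) (hα1 : α ≤ m1) :
    ∫ x in Icc (0:ℝ) 1, max (α - m1*x) 0 ^ 2 * x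
      = (α * (max α 0 ^ 3 / (3*m1)) - max α 0 ^ 4 / (4*m1)) / m1 := by
  rw [integral_Icc_eq_integral_Ioc, ← intervalIntegral.integral_of_le zero_le_one]
  have h : (fun x => max (α - m1*x) 0 ^ 2 * x)
      = fun x => (α * max (α - m1*x) 0 ^ (1+1) - max (α - m1*x) 0 ^ (2+1)) * (1/m1) := by
    funext x
    rcases le_or_gt (α - m1*x) 0 with h | h
    · rw [max_eq_right h]
      norm_num
    · rw [max_eq_left h.le]
      field_simp
      ring
  rw [h, intervalIntegral.integral_mul_const, intervalIntegral.integral_sub,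
    intervalIntegral.integral_const_mul, integral_maxpow_comp m1 α hm1 hα1 1,
    integral_maxpow_comp m1 α hm1 hα1 2]
  · push_cast
    ring
  · exact (continuous_const.mul ((continuous_maxpow 2).comp (by continuity))).intervalIntegrable 0 1
  · exact ((continuous_maxpow 3).comp (by continuity)).intervalIntegrable 0 1

section MainKeys

variable {m1 m2 m3 α : ℝ}

lemma key1 (hm1 : 0 < m1) (hm12 : m1 ≤ m2) (hm23 : m2 ≤ m3) (hα0 : 0 < α) (hα1 : α ≤ m1) :
    ∫ x in Icc (0:ℝ) 1, ∫ y in Icc (0:ℝ) 1,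
      ∫ _z in Icc (0:ℝ) ((α - m1*x - m2*y)/m3), (1:ℝ) = α^3/(6*m1*m2*m3) := by
  have hm2 : 0 < m2 := lt_of_lt_of_le hm1 hm12
  have hm3 : 0 < m3 := lt_of_lt_of_le hm2 hm23
  have step1 : ∀ x ∈ Icc (0:ℝ) 1,
      (∫ y in Icc (0:ℝ) 1, ∫ _z in Icc (0:ℝ) ((α - m1*x - m2*y)/m3), (1:ℝ))
        = max (α - m1*x) 0 ^ 2 / (2*m2*m3) := by
    intro x hx
    have hs2 : α - m1*x ≤ m2 := by nlinarith [hx.1]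
    rw [setIntegral_congr_fun measurableSet_Icc
      (fun y _ => setInt_Icc_const ((α - m1*x - m2*y)/m3)), J1 m2 m3 (α - m1*x) hm2 hm3 hs2]
  rw [setIntegral_congr_fun measurableSet_Icc step1, integral_div, K2 m1 α hm1 hα1,
    max_eq_left hα0.le]
  field_simp
  ring

lemma keyx (hm1 : 0 < m1) (hm12 : m1 ≤ m2) (hm23 : m2 ≤ m3) (hα0 : 0 < α) (hα1 : α ≤ m1) :
    ∫ x in Icc (0:ℝ) 1, ∫ y in Icc (0:ℝ) 1,
      ∫ _z in Icc (0:ℝ) ((α - m1*x - m2*y)/m3), x = α^4/(24*m1^2*m2*m3) := by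
  have hm2 : 0 < m2 := lt_of_lt_of_le hm1 hm12
  have hm3 : 0 < m3 := lt_of_lt_of_le hm2 hm23
  have step1 : ∀ x ∈ Icc (0:ℝ) 1,
      (∫ y in Icc (0:ℝ) 1, ∫ _z in Icc (0:ℝ) ((α - m1*x - m2*y)/m3), x)
        = max (α - m1*x) 0 ^ 2 / (2*m2*m3) * x := by
    intro x hx
    have hs2 : α - m1*x ≤ m2 := by nlinarith [hx.1]
    rw [setIntegral_congr_fun measurableSet_Icc
      (fun y _ => setInt_Icc_constc ((α - m1*x - m2*y)/m3) x),
      integral_mul_const, J1 m2 m3 (α - m1*x) hm2 hm3 hs2]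
  rw [setIntegral_congr_fun measurableSet_Icc step1,
    setIntegral_congr_fun measurableSet_Icc
      (fun x _ => by ring :
        ∀ x ∈ Icc (0:ℝ) 1, max (α - m1*x) 0 ^ 2 / (2*m2*m3) * x
          = max (α - m1*x) 0 ^ 2 * x * (1/(2*m2*m3))),
    integral_mul_const, Kx m1 α hm1 hα1, max_eq_left hα0.le]
  field_simp
  ring

lemma keyy (hm1 : 0 < m1) (hm12 : m1 ≤ m2) (hm23 : m2 ≤ m3) (hα0 : 0 < α) (hα1 : α ≤ m1) :
    ∫ x in Icc (0:ℝ) 1, ∫ y in Icc (0:ℝ) 1,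
      ∫ _z in Icc (0:ℝ) ((α - m1*x - m2*y)/m3), y = α^4/(24*m1*m2^2*m3) := by
  have hm2 : 0 < m2 := lt_of_lt_of_le hm1 hm12
  have hm3 : 0 < m3 := lt_of_lt_of_le hm2 hm23
  have step1 : ∀ x ∈ Icc (0:ℝ) 1,
      (∫ y in Icc (0:ℝ) 1, ∫ _z in Icc (0:ℝ) ((α - m1*x - m2*y)/m3), y)
        = max (α - m1*x) 0 ^ 3 / (6*m2^2*m3) := by
    intro x hx
    have hs2 : α - m1*x ≤ m2 := by nlinarith [hx.1]
    rw [setIntegral_congr_fun measurableSet_Icc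
      (fun y _ => setInt_Icc_constc ((α - m1*x - m2*y)/m3) y),
      Jy m2 m3 (α - m1*x) hm2 hm3 hs2]
  rw [setIntegral_congr_fun measurableSet_Icc step1, integral_div, K3 m1 α hm1 hα1,
    max_eq_left hα0.le]
  field_simp
  ring

lemma keyz (hm1 : 0 < m1) (hm12 : m1 ≤ m2) (hm23 : m2 ≤ m3) (hα0 : 0 < α) (hα1 : α ≤ m1) :
    ∫ x in Icc (0:ℝ) 1, ∫ y in Icc (0:ℝ) 1,
      ∫ z in Icc (0:ℝ) ((α - m1*x - m2*y)/m3), z = α^4/(24*m1*m2*m3^2) := by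
  have hm2 : 0 < m2 := lt_of_lt_of_le hm1 hm12
  have hm3 : 0 < m3 := lt_of_lt_of_le hm2 hm23
  have step1 : ∀ x ∈ Icc (0:ℝ) 1,
      (∫ y in Icc (0:ℝ) 1, ∫ z in Icc (0:ℝ) ((α - m1*x - m2*y)/m3), z)
        = max (α - m1*x) 0 ^ 3 / (6*m2*m3^2) := by
    intro x hx
    have hs2 : α - m1*x ≤ m2 := by nlinarith [hx.1]
    rw [setIntegral_congr_fun measurableSet_Icc
      (fun y _ => setInt_Icc_id ((α - m1*x - m2*y)/m3)),
      Jz m2 m3 (α - m1*x) hm2 hm3 hs2]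
  rw [setIntegral_congr_fun measurableSet_Icc step1, integral_div, K3 m1 α hm1 hα1,
    max_eq_left hα0.le]
  field_simp
  ring

end MainKeys

/-- Configuration 1 (triangle cut interface): centroid of the cut region of the
unit cube when `0 < α ≤ m1` has coordinates `α/(4 m_j)`. -/
theorem cut_centroid_config1 (m1 m2 m3 α : ℝ)
    (hm1 : 0 < m1) (hm12 : m1 ≤ m2) (hm23 : m2 ≤ m3)
    (hsum : m1 + m2 + m3 = 1) (hα0 : 0 < α) (hα1 : α ≤ m1)
    (S : Set (ℝ × ℝ × ℝ))
    (hS : S = {p : ℝ × ℝ × ℝ | p.1 ∈ Set.Icc 0 1 ∧ p.2.1 ∈ Set.Icc 0 1 ∧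
        p.2.2 ∈ Set.Icc 0 1 ∧ m1 * p.1 + m2 * p.2.1 + m3 * p.2.2 ≤ α}) :
    (∫ p in S, p.1) / (volume S).toReal = α / (4 * m1) ∧
    (∫ p in S, p.2.1) / (volume S).toReal = α / (4 * m2) ∧
    (∫ p in S, p.2.2) / (volume S).toReal = α / (4 * m3) := by
  have hm2 : 0 < m2 := lt_of_lt_of_le hm1 hm12
  have hm3 : 0 < m3 := lt_of_lt_of_le hm2 hm23
  have hvol : (volume S).toReal = α^3/(6*m1*m2*m3) := by
    have h0 : ∫ _p in S, (1:ℝ) = (volume S).toReal := by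
      rw [setIntegral_const, smul_eq_mul, mul_one, measureReal_def]
    rw [← h0, fubini3 m1 m2 m3 α hm1 hm12 hm23 hα1 S hS (fun _ => (1:ℝ)) continuous_const]
    exact key1 hm1 hm12 hm23 hα0 hα1
  have hIx : ∫ p in S, p.1 = α^4/(24*m1^2*m2*m3) := by
    rw [fubini3 m1 m2 m3 α hm1 hm12 hm23 hα1 S hS (fun p => p.1) continuous_fst]
    exact keyx hm1 hm12 hm23 hα0 hα1
  have hIy : ∫ p in S, p.2.1 = α^4/(24*m1*m2^2*m3) := by
    rw [fubini3 m1 m2 m3 α hm1 hm12 hm23 hα1 S hS (fun p => p.2.1) (by fun_prop)]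
    exact keyy hm1 hm12 hm23 hα0 hα1
  have hIz : ∫ p in S, p.2.2 = α^4/(24*m1*m2*m3^2) := by
    rw [fubini3 m1 m2 m3 α hm1 hm12 hm23 hα1 S hS (fun p => p.2.2) (by fun_prop)]
    exact keyz hm1 hm12 hm23 hα0 hα1
  rw [hvol, hIx, hIy, hIz]
  refine ⟨?_, ?_, ?_⟩ <;> (field_simp; ring)
end

section
/- Let 0 < m1 ≤ m2 ≤ m3 with m1 + m2 + m3 = 1, and let m1 ≤ α ≤ m2. Then the three-dimensional Lebesgue measure of the cut region S(α) = {x ∈ [0,1]³ : m1·x1 + m2·x2 + m3·x3 ≤ α} equals (α³ − (α − m1)³)/(6·m1·m2·m3). -/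
open MeasureTheory
open intervalIntegral in
lemma integral_id' (a b : ℝ) : ∫ x in a..b, x = (b ^ 2 - a ^ 2) / 2 := integral_id
open intervalIntegral in
lemma integral_pow' (a b : ℝ) (n : ℕ) : ∫ x in a..b, x ^ n = (b ^ (n + 1) - a ^ (n + 1)) / (n + 1) := integral_pow n

lemma tri_volume (m2 m3 c : ℝ) (h2 : 0 < m2) (h23 : m2 ≤ m3) (hc0 : 0 ≤ c) (hcm : c ≤ m2) :
    volume {q : ℝ × ℝ | q.1 ∈ Set.Icc 0 1 ∧ q.2 ∈ Set.Icc 0 1 ∧ m2 * q.1 + m3 * q.2 ≤ c} =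
      ENNReal.ofReal (c ^ 2 / (2 * m2 * m3)) := by
  have h3 : 0 < m3 := lt_of_lt_of_le h2 h23
  set S : Set (ℝ × ℝ) :=
    {q : ℝ × ℝ | q.1 ∈ Set.Icc 0 1 ∧ q.2 ∈ Set.Icc 0 1 ∧ m2 * q.1 + m3 * q.2 ≤ c} with hSdef
  have hmeas : MeasurableSet S := by
    have : S = (Prod.fst ⁻¹' Set.Icc (0:ℝ) 1) ∩ (Prod.snd ⁻¹' Set.Icc (0:ℝ) 1) ∩
        {q : ℝ × ℝ | m2 * q.1 + m3 * q.2 ≤ c} := by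
      ext q; simp [hSdef]; tauto
    rw [this]
    exact ((measurable_fst measurableSet_Icc).inter (measurable_snd measurableSet_Icc)).inter
      (measurableSet_le (((continuous_const.mul continuous_fst).add
        (continuous_const.mul continuous_snd)).measurable) measurable_const)
  have hbm : c / m2 ≤ 1 := by rw [div_le_one h2]; exact hcm
  have key : ∀ t : ℝ, volume (Prod.mk t ⁻¹' S) =
      Set.indicator (Set.Icc 0 (c / m2)) (fun t => ENNReal.ofReal ((c - m2 * t) / m3)) t := by
    intro t
    by_cases ht : t ∈ Set.Icc 0 (c / m2)
    · have ht1 : t ∈ Set.Icc (0:ℝ) 1 := ⟨ht.1, le_trans ht.2 hbm⟩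
      have hct : 0 ≤ c - m2 * t := by
        have := mul_le_mul_of_nonneg_left ht.2 h2.le
        rw [mul_div_cancel₀ _ h2.ne'] at this
        linarith
      have hle1 : (c - m2 * t) / m3 ≤ 1 := by
        rw [div_le_one h3]
        have : m2 * t ≥ 0 := mul_nonneg h2.le ht.1
        linarith
      have hslice : Prod.mk t ⁻¹' S = Set.Icc 0 ((c - m2 * t) / m3) := by
        ext x
        simp only [hSdef, Set.mem_preimage, Set.mem_setOf_eq, Set.mem_Icc]
        constructor
        · rintro ⟨-, ⟨hx0, -⟩, hx⟩
          exact ⟨hx0, by rw [le_div_iff₀ h3]; linarith⟩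
        · rintro ⟨hx0, hx⟩
          rw [le_div_iff₀ h3] at hx
          refine ⟨ht1, ⟨hx0, ?_⟩, by linarith⟩
          calc x = m3 * x / m3 := by field_simp
          _ ≤ (c - m2 * t) / m3 := by apply div_le_div_of_nonneg_right ?_ h3.le; linarith
          _ ≤ 1 := hle1
      rw [hslice, Set.indicator_of_mem ht, Real.volume_Icc]
      norm_num
    · have hslice : Prod.mk t ⁻¹' S = ∅ := by
        ext x
        simp only [hSdef, Set.mem_preimage, Set.mem_setOf_eq, Set.mem_empty_iff_false, iff_false]
        rintro ⟨⟨ht0, ht1'⟩, ⟨hx0, -⟩, hx⟩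
        apply ht
        refine ⟨ht0, ?_⟩
        rw [le_div_iff₀ h2]
        nlinarith [mul_nonneg h3.le hx0]
      simp [hslice, Set.indicator_of_notMem ht]
  rw [Measure.volume_eq_prod, Measure.prod_apply hmeas]
  simp_rw [key]
  rw [lintegral_indicator measurableSet_Icc _]
  have hcont : Continuous (fun t : ℝ => (c - m2 * t) / m3) := by continuity
  rw [← MeasureTheory.ofReal_integral_eq_lintegral_ofReal
      (hcont.integrableOn_Icc.mono_measure (le_refl _))]
  · rw [MeasureTheory.integral_Icc_eq_integral_Ioc,
      ← intervalIntegral.integral_of_le (by positivity : (0:ℝ) ≤ c / m2)]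
    have : ∀ t : ℝ, (c - m2 * t) / m3 = c / m3 - (m2 / m3) * t := by intro t; ring
    simp_rw [this]
    rw [intervalIntegral.integral_sub (intervalIntegrable_const)
        (Continuous.intervalIntegrable (u := fun x : ℝ => _ * x) (continuous_const.mul continuous_id') _ _),
      intervalIntegral.integral_const, intervalIntegral.integral_const_mul,
      integral_id' _ _]
    congr 1
    simp only [smul_eq_mul]
    field_simp
    ring
  · filter_upwards [ae_restrict_mem measurableSet_Icc] with t ht
    have hct : 0 ≤ c - m2 * t := by
      have := mul_le_mul_of_nonneg_left ht.2 h2.le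
      rw [mul_div_cancel₀ _ h2.ne'] at this
      linarith
    positivity

/-- Configuration 2 (quadrilateral cut interface): volume of the cut region of
the unit cube when `m1 ≤ α ≤ m2`. -/
theorem cut_volume_config2 (m1 m2 m3 α : ℝ)
    (hm1 : 0 < m1) (hm12 : m1 ≤ m2) (hm23 : m2 ≤ m3)
    (hsum : m1 + m2 + m3 = 1) (hα0 : m1 ≤ α) (hα1 : α ≤ m2) :
    volume {p : ℝ × ℝ × ℝ | p.1 ∈ Set.Icc 0 1 ∧ p.2.1 ∈ Set.Icc 0 1 ∧
        p.2.2 ∈ Set.Icc 0 1 ∧ m1 * p.1 + m2 * p.2.1 + m3 * p.2.2 ≤ α} =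
      ENNReal.ofReal ((α ^ 3 - (α - m1) ^ 3) / (6 * m1 * m2 * m3)) := by
  have h2 : 0 < m2 := lt_of_lt_of_le hm1 hm12
  have h3 : 0 < m3 := lt_of_lt_of_le h2 hm23
  set S : Set (ℝ × ℝ × ℝ) :=
    {p : ℝ × ℝ × ℝ | p.1 ∈ Set.Icc 0 1 ∧ p.2.1 ∈ Set.Icc 0 1 ∧
        p.2.2 ∈ Set.Icc 0 1 ∧ m1 * p.1 + m2 * p.2.1 + m3 * p.2.2 ≤ α} with hSdef
  have hmeas : MeasurableSet S := by
    have : S = Prod.fst ⁻¹' Set.Icc (0:ℝ) 1 ∩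
        ((fun p : ℝ × ℝ × ℝ => p.2.1) ⁻¹' Set.Icc 0 1 ∩
          ((fun p : ℝ × ℝ × ℝ => p.2.2) ⁻¹' Set.Icc 0 1 ∩
            {p : ℝ × ℝ × ℝ | m1 * p.1 + m2 * p.2.1 + m3 * p.2.2 ≤ α})) := by
      ext p; simp [hSdef]; try tauto
    rw [this]
    refine (measurable_fst measurableSet_Icc).inter
      (((measurable_fst.comp measurable_snd) measurableSet_Icc).inter
        (((measurable_snd.comp measurable_snd) measurableSet_Icc).inter
          (measurableSet_le ?_ measurable_const)))
    exact (((continuous_const.mul continuous_fst).add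
      (continuous_const.mul (continuous_fst.comp continuous_snd))).add
        (continuous_const.mul (continuous_snd.comp continuous_snd))).measurable
  have key : ∀ t : ℝ, volume (Prod.mk t ⁻¹' S) =
      Set.indicator (Set.Icc 0 1)
        (fun t => ENNReal.ofReal ((α - m1 * t) ^ 2 / (2 * m2 * m3))) t := by
    intro t
    by_cases ht : t ∈ Set.Icc (0:ℝ) 1
    · have hc0 : 0 ≤ α - m1 * t := by nlinarith [ht.1, ht.2]
      have hcm : α - m1 * t ≤ m2 := by nlinarith [ht.1]
      have hslice : Prod.mk t ⁻¹' S =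
          {q : ℝ × ℝ | q.1 ∈ Set.Icc 0 1 ∧ q.2 ∈ Set.Icc 0 1 ∧
            m2 * q.1 + m3 * q.2 ≤ α - m1 * t} := by
        ext q
        simp only [hSdef, Set.mem_preimage, Set.mem_setOf_eq]
        constructor
        · rintro ⟨-, h1, h2, h3⟩; exact ⟨h1, h2, by linarith⟩
        · rintro ⟨h1, h2, h3⟩; exact ⟨ht, h1, h2, by linarith⟩
      rw [hslice, tri_volume m2 m3 _ h2 hm23 hc0 hcm, Set.indicator_of_mem ht]
    · have hslice : Prod.mk t ⁻¹' S = ∅ := by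
        ext q
        simp only [hSdef, Set.mem_preimage, Set.mem_setOf_eq, Set.mem_empty_iff_false, iff_false]
        rintro ⟨ht', -⟩; exact ht ht'
      simp [hslice, Set.indicator_of_notMem ht]
  rw [Measure.volume_eq_prod, Measure.prod_apply hmeas]
  simp_rw [key]
  rw [lintegral_indicator measurableSet_Icc _]
  have hcont : Continuous (fun t : ℝ => (α - m1 * t) ^ 2 / (2 * m2 * m3)) := by continuity
  rw [← MeasureTheory.ofReal_integral_eq_lintegral_ofReal hcont.integrableOn_Icc]
  · rw [MeasureTheory.integral_Icc_eq_integral_Ioc,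
      ← intervalIntegral.integral_of_le (by norm_num : (0:ℝ) ≤ 1)]
    have hexp : ∀ t : ℝ, (α - m1 * t) ^ 2 / (2 * m2 * m3) =
        (α ^ 2 / (2 * m2 * m3)) - (α * m1 / (m2 * m3)) * t +
          (m1 ^ 2 / (2 * m2 * m3)) * t ^ 2 := by intro t; field_simp; ring
    simp_rw [hexp]
    rw [intervalIntegral.integral_add (((intervalIntegrable_const).sub
        (Continuous.intervalIntegrable (u := fun x : ℝ => _ * x) (continuous_const.mul continuous_id') _ _)))
        (Continuous.intervalIntegrable (u := fun x : ℝ => _ * x ^ 2) (continuous_const.mul (continuous_pow 2)) _ _),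
      intervalIntegral.integral_sub intervalIntegrable_const
        (Continuous.intervalIntegrable (u := fun x : ℝ => _ * x) (continuous_const.mul continuous_id') _ _),
      intervalIntegral.integral_const, intervalIntegral.integral_const_mul,
      intervalIntegral.integral_const_mul, integral_id' _ _,
      integral_pow' _ _ _]
    congr 1
    simp only [smul_eq_mul]
    field_simp
    ring
  · filter_upwards [ae_restrict_mem measurableSet_Icc] with t ht
    positivity
end

section
/- Let 0 < m1 ≤ m2 ≤ m3 with m1 + m2 + m3 = 1, let m1 ≤ α ≤ m2 with α > 0, and set A = α³ − (α − m1)³. Let S(α) = {x ∈ [0,1]³ : m1·x1 + m2·x2 + m3·x3 ≤ α} and let c_j = (∫_{S(α)} x_j dλ)/λ(S(α)) denote the coordinates of its centroid. Then c1 = [α⁴ − (α − m1)³·(α + 3·m1)]/(4·m1·A), c2 = [α⁴ − (α − m1)⁴]/(4·m2·A), and c3 = [α⁴ − (α − m1)⁴]/(4·m3·A). -/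
open MeasureTheory

open Set in
private lemma slice_integral' {X Y : Type*} [MeasureSpace X] [MeasureSpace Y]
    [SFinite (volume : Measure X)] [SFinite (volume : Measure Y)]
    {s : Set X} (hs : MeasurableSet s) {t : X → Set Y}
    (ht : ∀ x, MeasurableSet (t x))
    {f : X → Y → ℝ}
    (hE : MeasurableSet {p : X × Y | p.1 ∈ s ∧ p.2 ∈ t p.1})
    (hint : Integrable ({p : X × Y | p.1 ∈ s ∧ p.2 ∈ t p.1}.indicator
      (fun p => f p.1 p.2))) :
    ∫ p in {p : X × Y | p.1 ∈ s ∧ p.2 ∈ t p.1}, f p.1 p.2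
      = ∫ x in s, ∫ y in t x, f x y := by
  rw [← integral_indicator hE]
  rw [show (volume : Measure (X × Y)) = (volume : Measure X).prod volume from rfl]
  rw [integral_prod _ hint]
  rw [← integral_indicator hs]
  congr 1
  funext x
  by_cases hx : x ∈ s
  · rw [indicator_of_mem hx, ← integral_indicator (ht x)]
    congr 1
    funext y
    by_cases hy : y ∈ t x
    · simp [hx, hy]
    · simp [hy]
  · rw [indicator_of_notMem hx]
    have h0 : ∀ y, ({p : X × Y | p.1 ∈ s ∧ p.2 ∈ t p.1}.indicator
        (fun p => f p.1 p.2)) (x, y) = 0 := fun y =>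
      indicator_of_notMem (by simp [hx]) _
    simp [h0]

open Set in
private lemma integral_Icc_poly' (a b c d B : ℝ) (hB : 0 ≤ B) :
    ∫ y in Icc (0:ℝ) B, (a + b*y + c*y^2 + d*y^3)
      = a*B + b*B^2/2 + c*B^3/3 + d*B^4/4 := by
  rw [integral_Icc_eq_integral_Ioc, ← intervalIntegral.integral_of_le hB]
  have key : ∀ y ∈ uIcc (0:ℝ) B,
      HasDerivAt (fun y => a*y + b*y^2/2 + c*y^3/3 + d*y^4/4)
        (a + b*y + c*y^2 + d*y^3) y := by
    intro y _
    have h1 : HasDerivAt (fun y : ℝ => y) 1 y := hasDerivAt_id y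
    have h2 := hasDerivAt_pow 2 y
    have h3 := hasDerivAt_pow 3 y
    have h4 := hasDerivAt_pow 4 y
    refine ((((h1.const_mul a).add ((h2.const_mul b).div_const 2)).add
      ((h3.const_mul c).div_const 3)).add ((h4.const_mul d).div_const 4)).congr_deriv ?_
    push_cast
    ring
  rw [intervalIntegral.integral_eq_sub_of_hasDerivAt key
    ((Continuous.intervalIntegrable (by continuity) 0 B))]
  ring

set_option maxHeartbeats 1000000 in
/-- Configuration 2 (quadrilateral cut interface): centroid of the cut region of
the unit cube when `m1 ≤ α ≤ m2`, `α > 0`. -/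
theorem cut_centroid_config2 (m1 m2 m3 α : ℝ)
    (hm1 : 0 < m1) (hm12 : m1 ≤ m2) (hm23 : m2 ≤ m3)
    (hsum : m1 + m2 + m3 = 1) (hα0 : m1 ≤ α) (hα1 : α ≤ m2) (hαpos : 0 < α)
    (A : ℝ) (hA : A = α ^ 3 - (α - m1) ^ 3)
    (S : Set (ℝ × ℝ × ℝ))
    (hS : S = {p : ℝ × ℝ × ℝ | p.1 ∈ Set.Icc 0 1 ∧ p.2.1 ∈ Set.Icc 0 1 ∧
        p.2.2 ∈ Set.Icc 0 1 ∧ m1 * p.1 + m2 * p.2.1 + m3 * p.2.2 ≤ α}) :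
    (∫ p in S, p.1) / (volume S).toReal =
      (α ^ 4 - (α - m1) ^ 3 * (α + 3 * m1)) / (4 * m1 * A) ∧
    (∫ p in S, p.2.1) / (volume S).toReal =
      (α ^ 4 - (α - m1) ^ 4) / (4 * m2 * A) ∧
    (∫ p in S, p.2.2) / (volume S).toReal =
      (α ^ 4 - (α - m1) ^ 4) / (4 * m3 * A) := by
  have hm2 : 0 < m2 := lt_of_lt_of_le hm1 hm12
  have hm3 : 0 < m3 := lt_of_lt_of_le hm2 hm23
  -- the nested-slice description of S
  have hset : S = {p : ℝ × ℝ × ℝ | p.1 ∈ Set.Icc (0:ℝ) 1 ∧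
      p.2 ∈ {q : ℝ × ℝ | q.1 ∈ Set.Icc (0:ℝ) ((α - m1*p.1)/m2) ∧
        q.2 ∈ Set.Icc (0:ℝ) ((α - m1*p.1 - m2*q.1)/m3)}} := by
    rw [hS]
    ext ⟨x, y, z⟩
    simp only [Set.mem_setOf_eq, Set.mem_Icc]
    constructor
    · rintro ⟨⟨hx0, hx1⟩, ⟨hy0, hy1⟩, ⟨hz0, hz1⟩, hle⟩
      refine ⟨⟨hx0, hx1⟩, ⟨hy0, ?_⟩, ⟨hz0, ?_⟩⟩
      · rw [le_div_iff₀ hm2]; nlinarith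
      · rw [le_div_iff₀ hm3]; nlinarith
    · rintro ⟨⟨hx0, hx1⟩, ⟨hy0, hyb⟩, ⟨hz0, hzc⟩⟩
      rw [le_div_iff₀ hm2] at hyb
      rw [le_div_iff₀ hm3] at hzc
      refine ⟨⟨hx0, hx1⟩, ⟨hy0, ?_⟩, ⟨hz0, ?_⟩, by nlinarith⟩
      · nlinarith [mul_nonneg hm1.le hx0]
      · nlinarith [mul_nonneg hm1.le hx0, mul_nonneg hm2.le hy0]
  -- S is closed
  have hSclosed : IsClosed S := by
    rw [hS]
    have heq : {p : ℝ × ℝ × ℝ | p.1 ∈ Set.Icc 0 1 ∧ p.2.1 ∈ Set.Icc 0 1 ∧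
        p.2.2 ∈ Set.Icc 0 1 ∧ m1 * p.1 + m2 * p.2.1 + m3 * p.2.2 ≤ α} =
        ((fun p : ℝ × ℝ × ℝ => p.1) ⁻¹' Set.Icc 0 1) ∩
        (((fun p : ℝ × ℝ × ℝ => p.2.1) ⁻¹' Set.Icc 0 1) ∩
        (((fun p : ℝ × ℝ × ℝ => p.2.2) ⁻¹' Set.Icc 0 1) ∩
        {p : ℝ × ℝ × ℝ | m1 * p.1 + m2 * p.2.1 + m3 * p.2.2 ≤ α})) := by
      ext p
      simp only [Set.mem_setOf_eq, Set.mem_inter_iff, Set.mem_preimage]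
    rw [heq]
    have hlin : Continuous (fun p : ℝ × ℝ × ℝ =>
        m1 * p.1 + m2 * p.2.1 + m3 * p.2.2) :=
      ((continuous_const.mul continuous_fst).add
        (continuous_const.mul (continuous_fst.comp continuous_snd))).add
        (continuous_const.mul (continuous_snd.comp continuous_snd))
    exact (isClosed_Icc.preimage continuous_fst).inter
      ((isClosed_Icc.preimage (continuous_fst.comp continuous_snd)).inter
      ((isClosed_Icc.preimage (continuous_snd.comp continuous_snd)).inter
        (isClosed_le hlin continuous_const)))
  have hScompact : IsCompact S := by
    refine (isCompact_Icc (a := ((0:ℝ),(0:ℝ),(0:ℝ))) (b := (1,1,1))).of_isClosed_subset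
      hSclosed ?_
    rw [hS]
    rintro ⟨x, y, z⟩ ⟨hx, hy, hz, -⟩
    simp only [Set.mem_Icc, Prod.le_def] at *
    exact ⟨⟨hx.1, hy.1, hz.1⟩, ⟨hx.2, hy.2, hz.2⟩⟩
  have hSmeas : MeasurableSet S := hSclosed.measurableSet
  -- slices are closed
  have hslice_closed : ∀ x : ℝ, IsClosed {q : ℝ × ℝ |
      q.1 ∈ Set.Icc (0:ℝ) ((α - m1*x)/m2) ∧
      q.2 ∈ Set.Icc (0:ℝ) ((α - m1*x - m2*q.1)/m3)} := by
    intro x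
    have heq : {q : ℝ × ℝ | q.1 ∈ Set.Icc (0:ℝ) ((α - m1*x)/m2) ∧
        q.2 ∈ Set.Icc (0:ℝ) ((α - m1*x - m2*q.1)/m3)} =
        ((fun q : ℝ × ℝ => q.1) ⁻¹' Set.Icc (0:ℝ) ((α - m1*x)/m2)) ∩
        ({q : ℝ × ℝ | 0 ≤ q.2} ∩ {q : ℝ × ℝ | q.2 ≤ (α - m1*x - m2*q.1)/m3}) := by
      ext q
      simp only [Set.mem_setOf_eq, Set.mem_Icc, Set.mem_inter_iff, Set.mem_preimage]
    rw [heq]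
    exact (isClosed_Icc.preimage continuous_fst).inter
      ((isClosed_le continuous_const continuous_snd).inter
        (isClosed_le continuous_snd
          (((continuous_const.sub (continuous_const.mul continuous_fst))).div_const m3)))
  -- slices are compact
  have hslice_compact : ∀ x ∈ Set.Icc (0:ℝ) 1, IsCompact {q : ℝ × ℝ |
      q.1 ∈ Set.Icc (0:ℝ) ((α - m1*x)/m2) ∧
      q.2 ∈ Set.Icc (0:ℝ) ((α - m1*x - m2*q.1)/m3)} := by
    intro x hx
    refine (isCompact_Icc (a := ((0:ℝ),(0:ℝ)))
      (b := ((α - m1*x)/m2, α/m3))).of_isClosed_subset (hslice_closed x) ?_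
    rintro ⟨y, z⟩ ⟨⟨hy0, hy1⟩, ⟨hz0, hz1⟩⟩
    simp only [Set.mem_Icc, Prod.le_def]
    refine ⟨⟨hy0, hz0⟩, ⟨hy1, ?_⟩⟩
    rw [le_div_iff₀ hm3] at hz1 ⊢
    have hx0 := hx.1
    nlinarith [mul_nonneg hm1.le hx0, mul_nonneg hm2.le hy0]
  -- key iterated-integral identity
  have key : ∀ f : ℝ → ℝ → ℝ → ℝ,
      Continuous (fun p : ℝ × ℝ × ℝ => f p.1 p.2.1 p.2.2) →
      ∫ p in S, f p.1 p.2.1 p.2.2 =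
        ∫ x in Set.Icc (0:ℝ) 1, ∫ y in Set.Icc (0:ℝ) ((α - m1*x)/m2),
          ∫ z in Set.Icc (0:ℝ) ((α - m1*x - m2*y)/m3), f x y z := by
    intro f hf
    rw [hset]
    have hEmeas : MeasurableSet {p : ℝ × ℝ × ℝ | p.1 ∈ Set.Icc (0:ℝ) 1 ∧
        p.2 ∈ {q : ℝ × ℝ | q.1 ∈ Set.Icc (0:ℝ) ((α - m1*p.1)/m2) ∧
          q.2 ∈ Set.Icc (0:ℝ) ((α - m1*p.1 - m2*q.1)/m3)}} := hset ▸ hSmeas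
    have hEcompact : IsCompact {p : ℝ × ℝ × ℝ | p.1 ∈ Set.Icc (0:ℝ) 1 ∧
        p.2 ∈ {q : ℝ × ℝ | q.1 ∈ Set.Icc (0:ℝ) ((α - m1*p.1)/m2) ∧
          q.2 ∈ Set.Icc (0:ℝ) ((α - m1*p.1 - m2*q.1)/m3)}} := hset ▸ hScompact
    have step1 := slice_integral' (X := ℝ) (Y := ℝ × ℝ)
      (s := Set.Icc (0:ℝ) 1) measurableSet_Icc
      (t := fun x => {q : ℝ × ℝ | q.1 ∈ Set.Icc (0:ℝ) ((α - m1*x)/m2) ∧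
        q.2 ∈ Set.Icc (0:ℝ) ((α - m1*x - m2*q.1)/m3)})
      (fun x => (hslice_closed x).measurableSet)
      (f := fun x q => f x q.1 q.2) hEmeas
      (by
        rw [integrable_indicator_iff hEmeas]
        exact hf.continuousOn.integrableOn_compact hEcompact)
    refine step1.trans ?_
    refine setIntegral_congr_fun measurableSet_Icc ?_
    intro x hx
    have hfx : Continuous (fun q : ℝ × ℝ => f x q.1 q.2) :=
      hf.comp (continuous_const.prodMk continuous_id)
    exact slice_integral' (X := ℝ) (Y := ℝ)
      (s := Set.Icc (0:ℝ) ((α - m1*x)/m2)) measurableSet_Icc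
      (t := fun y => Set.Icc (0:ℝ) ((α - m1*x - m2*y)/m3))
      (fun y => measurableSet_Icc)
      (f := fun y z => f x y z)
      (hslice_closed x).measurableSet
      (by
        rw [integrable_indicator_iff (hslice_closed x).measurableSet]
        exact hfx.continuousOn.integrableOn_compact (hslice_compact x hx))
  -- basic bounds
  have hβ : (0:ℝ) ≤ α - m1 := by linarith
  -- pointwise facts used repeatedly
  have hGx : ∀ x ∈ Set.Icc (0:ℝ) 1, 0 ≤ α - m1*x := by
    intro x hx
    nlinarith [hx.1, hx.2]
  have hBx : ∀ x ∈ Set.Icc (0:ℝ) 1, 0 ≤ (α - m1*x)/m2 := fun x hx =>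
    div_nonneg (hGx x hx) hm2.le
  have hCy : ∀ x ∈ Set.Icc (0:ℝ) 1, ∀ y ∈ Set.Icc (0:ℝ) ((α - m1*x)/m2),
      0 ≤ (α - m1*x - m2*y)/m3 := by
    intro x hx y hy
    have := hy.2
    rw [le_div_iff₀ hm2] at this
    exact div_nonneg (by linarith) hm3.le
  have hm1' : m1 ≠ 0 := ne_of_gt hm1
  have hm2' : m2 ≠ 0 := ne_of_gt hm2
  have hm3' : m3 ≠ 0 := ne_of_gt hm3
  -- compute the four integrals
  have hI0 : ∫ p in S, (1:ℝ) = (α^3 - (α - m1)^3)/(6*m1*m2*m3) := by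
    rw [key (fun _ _ _ => (1:ℝ)) continuous_const]
    have inner : ∀ x ∈ Set.Icc (0:ℝ) 1,
        (∫ y in Set.Icc (0:ℝ) ((α - m1*x)/m2),
          ∫ z in Set.Icc (0:ℝ) ((α - m1*x - m2*y)/m3), (1:ℝ))
        = α^2/(2*m2*m3) + (-(α*m1/(m2*m3)))*x + (m1^2/(2*m2*m3))*x^2 + 0*x^3 := by
      intro x hx
      have hmid : ∀ y ∈ Set.Icc (0:ℝ) ((α - m1*x)/m2),
          (∫ z in Set.Icc (0:ℝ) ((α - m1*x - m2*y)/m3), (1:ℝ))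
          = (α - m1*x)/m3 + (-(m2/m3))*y + 0*y^2 + 0*y^3 := by
        intro y hy
        have h1 : (∫ z in Set.Icc (0:ℝ) ((α - m1*x - m2*y)/m3), (1:ℝ))
            = (α - m1*x - m2*y)/m3 := by
          simpa using integral_Icc_poly' 1 0 0 0 _ (hCy x hx y hy)
        rw [h1]; field_simp; ring
      rw [setIntegral_congr_fun measurableSet_Icc hmid,
        integral_Icc_poly' _ _ _ _ _ (hBx x hx)]
      field_simp; ring
    rw [setIntegral_congr_fun measurableSet_Icc inner,
      integral_Icc_poly' _ _ _ _ _ zero_le_one]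
    field_simp; ring
  have hI1 : ∫ p in S, p.1 = (α^4 - (α-m1)^4 - 4*m1*(α-m1)^3)/(24*m1^2*m2*m3) := by
    rw [key (fun x _ _ => x) continuous_fst]
    have inner : ∀ x ∈ Set.Icc (0:ℝ) 1,
        (∫ y in Set.Icc (0:ℝ) ((α - m1*x)/m2),
          ∫ z in Set.Icc (0:ℝ) ((α - m1*x - m2*y)/m3), x)
        = 0 + (α^2/(2*m2*m3))*x + (-(α*m1/(m2*m3)))*x^2 + (m1^2/(2*m2*m3))*x^3 := by
      intro x hx
      have hmid : ∀ y ∈ Set.Icc (0:ℝ) ((α - m1*x)/m2),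
          (∫ z in Set.Icc (0:ℝ) ((α - m1*x - m2*y)/m3), x)
          = x*(α - m1*x)/m3 + (-(x*m2/m3))*y + 0*y^2 + 0*y^3 := by
        intro y hy
        have h1 : (∫ z in Set.Icc (0:ℝ) ((α - m1*x - m2*y)/m3), x)
            = x*((α - m1*x - m2*y)/m3) := by
          simpa using integral_Icc_poly' x 0 0 0 _ (hCy x hx y hy)
        rw [h1]; field_simp; ring
      rw [setIntegral_congr_fun measurableSet_Icc hmid,
        integral_Icc_poly' _ _ _ _ _ (hBx x hx)]
      field_simp; ring
    rw [setIntegral_congr_fun measurableSet_Icc inner,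
      integral_Icc_poly' _ _ _ _ _ zero_le_one]
    field_simp; ring
  have hI2 : ∫ p in S, p.2.1 = (α^4 - (α-m1)^4)/(24*m1*m2^2*m3) := by
    rw [key (fun _ y _ => y) (continuous_fst.comp continuous_snd)]
    have inner : ∀ x ∈ Set.Icc (0:ℝ) 1,
        (∫ y in Set.Icc (0:ℝ) ((α - m1*x)/m2),
          ∫ z in Set.Icc (0:ℝ) ((α - m1*x - m2*y)/m3), y)
        = α^3/(6*m2^2*m3) + (-(3*α^2*m1/(6*m2^2*m3)))*x
            + (3*α*m1^2/(6*m2^2*m3))*x^2 + (-(m1^3/(6*m2^2*m3)))*x^3 := by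
      intro x hx
      have hmid : ∀ y ∈ Set.Icc (0:ℝ) ((α - m1*x)/m2),
          (∫ z in Set.Icc (0:ℝ) ((α - m1*x - m2*y)/m3), y)
          = 0 + ((α - m1*x)/m3)*y + (-(m2/m3))*y^2 + 0*y^3 := by
        intro y hy
        have h1 : (∫ z in Set.Icc (0:ℝ) ((α - m1*x - m2*y)/m3), y)
            = y*((α - m1*x - m2*y)/m3) := by
          simpa using integral_Icc_poly' y 0 0 0 _ (hCy x hx y hy)
        rw [h1]; field_simp; ring
      rw [setIntegral_congr_fun measurableSet_Icc hmid,
        integral_Icc_poly' _ _ _ _ _ (hBx x hx)]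
      field_simp; ring
    rw [setIntegral_congr_fun measurableSet_Icc inner,
      integral_Icc_poly' _ _ _ _ _ zero_le_one]
    field_simp; ring
  have hI3 : ∫ p in S, p.2.2 = (α^4 - (α-m1)^4)/(24*m1*m2*m3^2) := by
    rw [key (fun _ _ z => z) (continuous_snd.comp continuous_snd)]
    have inner : ∀ x ∈ Set.Icc (0:ℝ) 1,
        (∫ y in Set.Icc (0:ℝ) ((α - m1*x)/m2),
          ∫ z in Set.Icc (0:ℝ) ((α - m1*x - m2*y)/m3), z)
        = α^3/(6*m2*m3^2) + (-(3*α^2*m1/(6*m2*m3^2)))*x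
            + (3*α*m1^2/(6*m2*m3^2))*x^2 + (-(m1^3/(6*m2*m3^2)))*x^3 := by
      intro x hx
      have hmid : ∀ y ∈ Set.Icc (0:ℝ) ((α - m1*x)/m2),
          (∫ z in Set.Icc (0:ℝ) ((α - m1*x - m2*y)/m3), z)
          = (α - m1*x)^2/(2*m3^2) + (-((α - m1*x)*m2/m3^2))*y
              + (m2^2/(2*m3^2))*y^2 + 0*y^3 := by
        intro y hy
        have h1 : (∫ z in Set.Icc (0:ℝ) ((α - m1*x - m2*y)/m3), z)
            = ((α - m1*x - m2*y)/m3)^2/2 := by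
          simpa using integral_Icc_poly' 0 1 0 0 _ (hCy x hx y hy)
        rw [h1]; field_simp; ring
      rw [setIntegral_congr_fun measurableSet_Icc hmid,
        integral_Icc_poly' _ _ _ _ _ (hBx x hx)]
      field_simp; ring
    rw [setIntegral_congr_fun measurableSet_Icc inner,
      integral_Icc_poly' _ _ _ _ _ zero_le_one]
    field_simp; ring
  -- the volume
  have hVol : (volume S).toReal = (α^3 - (α - m1)^3)/(6*m1*m2*m3) := by
    have : (∫ p in S, (1:ℝ)) = (volume S).toReal • (1:ℝ) := setIntegral_const 1
    rw [← hI0, this, smul_eq_mul, mul_one]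
  have hApos : (0:ℝ) < α^3 - (α - m1)^3 := by
    have h1 : α - m1 < α := by linarith
    have := pow_lt_pow_left₀ h1 hβ (n := 3) (by norm_num)
    linarith
  have hAne : A ≠ 0 := by rw [hA]; exact ne_of_gt hApos
  have hNe : (α^3 - (α - m1)^3) ≠ 0 := ne_of_gt hApos
  refine ⟨?_, ?_, ?_⟩
  · rw [hI1, hVol, hA, div_div_div_comm]
    field_simp
    ring
  · rw [hI2, hVol, hA, div_div_div_comm]
    field_simp
    ring
  · rw [hI3, hVol, hA, div_div_div_comm]
    field_simp
    ring
end

section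
/- Let 0 < m1 ≤ m2 ≤ m3 with m1 + m2 + m3 = 1, let m2 ≤ α ≤ min(m1 + m2, m3), and set A = α³ − (α − m1)³ − (α − m2)³. Let S(α) = {x ∈ [0,1]³ : m1·x1 + m2·x2 + m3·x3 ≤ α} and let c_j = (∫_{S(α)} x_j dλ)/λ(S(α)) denote the coordinates of its centroid. Then c1 = [α⁴ − (α − m1)³·(α + 3·m1) − (α − m2)⁴]/(4·m1·A), c2 = [α⁴ − (α − m1)⁴ − (α − m2)³·(α + 3·m2)]/(4·m2·A), and c3 = [α⁴ − (α − m1)⁴ − (α − m2)⁴]/(4·m3·A). -/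
set_option maxHeartbeats 1000000


open MeasureTheory Set

lemma integral_cubic (a b c0 c1 c2 c3 : ℝ) :
    ∫ x in a..b, (c0 + c1*x + c2*x^2 + c3*x^3) =
      c0*(b-a) + c1*(b^2-a^2)/2 + c2*(b^3-a^3)/3 + c3*(b^4-a^4)/4 := by
  have i0 : IntervalIntegrable (fun _ : ℝ => c0) volume a b :=
    continuous_const.intervalIntegrable a b
  have i1 : IntervalIntegrable (fun x : ℝ => c1 * x) volume a b :=
    (continuous_const.mul continuous_id).intervalIntegrable a b
  have i2 : IntervalIntegrable (fun x : ℝ => c2 * x ^ 2) volume a b :=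
    (continuous_const.mul (continuous_pow 2)).intervalIntegrable a b
  have i3 : IntervalIntegrable (fun x : ℝ => c3 * x ^ 3) volume a b :=
    (continuous_const.mul (continuous_pow 3)).intervalIntegrable a b
  rw [intervalIntegral.integral_add ((i0.add i1).add i2) i3,
    intervalIntegral.integral_add (i0.add i1) i2,
    intervalIntegral.integral_add i0 i1,
    intervalIntegral.integral_const, intervalIntegral.integral_const_mul,
    intervalIntegral.integral_const_mul, intervalIntegral.integral_const_mul,
    integral_id, integral_pow, integral_pow]
  push_cast
  rw [smul_eq_mul]
  ring

lemma integral_quad (a b c0 c1 c2 : ℝ) :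
    ∫ x in a..b, (c0 + c1*x + c2*x^2) =
      c0*(b-a) + c1*(b^2-a^2)/2 + c2*(b^3-a^3)/3 := by
  have := integral_cubic a b c0 c1 c2 0
  rw [intervalIntegral.integral_congr
    (g := fun x => c0 + c1*x + c2*x^2 + 0*x^3) (fun x _ => by ring)]
  rw [this]; ring

lemma slice_integral {E : Type*} [MeasureSpace E] [SigmaFinite (volume : Measure E)]
    (T : Set (ℝ × E)) (f : ℝ × E → ℝ)
    (hf : Integrable (T.indicator f))
    (hT : MeasurableSet T)
    (s : Set ℝ) (hs : MeasurableSet s)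
    (U : ℝ → Set E) (hU : ∀ x, MeasurableSet (U x))
    (hTeq : ∀ x q, ((x, q) ∈ T ↔ x ∈ s ∧ q ∈ U x)) :
    ∫ p in T, f p = ∫ x in s, ∫ q in U x, f (x, q) := by
  rw [← integral_indicator hT]
  rw [Measure.volume_eq_prod] at hf ⊢
  rw [MeasureTheory.integral_prod _ hf]
  rw [← integral_indicator hs]
  congr 1
  funext x
  by_cases hx : x ∈ s
  · rw [indicator_of_mem hx, ← integral_indicator (hU x)]
    congr 1
    funext q
    by_cases hq : q ∈ U x
    · rw [indicator_of_mem hq, indicator_of_mem ((hTeq x q).2 ⟨hx, hq⟩)]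
    · rw [indicator_of_notMem hq, indicator_of_notMem (fun h => hq ((hTeq x q).1 h).2)]
  · rw [indicator_of_notMem hx]
    have : ∀ q, T.indicator f (x, q) = 0 := fun q =>
      indicator_of_notMem (fun h => hx ((hTeq x q).1 h).1) _
    simp only [this, integral_zero]

lemma iterated_reduce (g : ℝ → ℝ) (h : ℝ → ℝ → ℝ)
    (hg : Continuous g) (hh : Continuous fun p : ℝ × ℝ => h p.1 p.2)
    (hg1 : ∀ x ∈ Icc (0:ℝ) 1, g x ≤ 1)
    (hh1 : ∀ x ∈ Icc (0:ℝ) 1, ∀ y ∈ Icc 0 (g x), h x y ≤ 1)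
    (F : ℝ × ℝ × ℝ → ℝ) (hF : Continuous F) :
    ∫ p in {p : ℝ × ℝ × ℝ | p.1 ∈ Icc 0 1 ∧ p.2.1 ∈ Icc 0 (g p.1) ∧
        p.2.2 ∈ Icc 0 (h p.1 p.2.1)}, F p
      = ∫ x in Icc (0:ℝ) 1, ∫ y in Icc 0 (g x), ∫ z in Icc 0 (h x y), F (x, y, z) := by
  set T : Set (ℝ × ℝ × ℝ) := {p | p.1 ∈ Icc 0 1 ∧ p.2.1 ∈ Icc 0 (g p.1) ∧
        p.2.2 ∈ Icc 0 (h p.1 p.2.1)} with hTdef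
  have c1 : Continuous fun p : ℝ × ℝ × ℝ => p.1 := continuous_fst
  have c2 : Continuous fun p : ℝ × ℝ × ℝ => p.2.1 := continuous_fst.comp continuous_snd
  have c3 : Continuous fun p : ℝ × ℝ × ℝ => p.2.2 := continuous_snd.comp continuous_snd
  have hTc : IsClosed T := by
    have : T = ({p : ℝ × ℝ × ℝ | 0 ≤ p.1} ∩ {p | p.1 ≤ 1}) ∩
        (({p | 0 ≤ p.2.1} ∩ {p | p.2.1 ≤ g p.1}) ∩
         ({p | 0 ≤ p.2.2} ∩ {p | p.2.2 ≤ h p.1 p.2.1})) := by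
      ext p; simp [hTdef, Set.mem_Icc, and_assoc]
    rw [this]
    exact (((isClosed_le continuous_const c1).inter (isClosed_le c1 continuous_const)).inter
      (((isClosed_le continuous_const c2).inter (isClosed_le c2 (hg.comp c1))).inter
       ((isClosed_le continuous_const c3).inter (isClosed_le c3 (hh.comp (c1.prodMk c2))))))
  have hTm : MeasurableSet T := hTc.measurableSet
  have hsub : T ⊆ Icc ((0:ℝ),(0:ℝ),(0:ℝ)) (1,1,1) := by
    rintro ⟨x, y, z⟩ ⟨hx, hy, hz⟩
    have hgx := hg1 x hx
    have hhxy := hh1 x hx y hy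
    simp only [Set.mem_Icc, Prod.le_def] at *
    exact ⟨⟨hx.1, hy.1, hz.1⟩, hx.2, le_trans hy.2 hgx, le_trans hz.2 hhxy⟩
  have hintT : IntegrableOn F T :=
    (hF.continuousOn.integrableOn_compact isCompact_Icc).mono_set hsub
  have hf : Integrable (T.indicator F) := (integrable_indicator_iff hTm).2 hintT
  have hUm : ∀ x : ℝ, MeasurableSet {q : ℝ × ℝ | q.1 ∈ Icc 0 (g x) ∧ q.2 ∈ Icc 0 (h x q.1)} := by
    intro x
    have d1 : Continuous fun q : ℝ × ℝ => q.1 := continuous_fst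
    have d2 : Continuous fun q : ℝ × ℝ => q.2 := continuous_snd
    have : {q : ℝ × ℝ | q.1 ∈ Icc 0 (g x) ∧ q.2 ∈ Icc 0 (h x q.1)} =
        ({q : ℝ × ℝ | 0 ≤ q.1} ∩ {q | q.1 ≤ g x}) ∩
        ({q | 0 ≤ q.2} ∩ {q | q.2 ≤ h x q.1}) := by
      ext q; simp [Set.mem_Icc, and_assoc]
    rw [this]
    exact (((isClosed_le continuous_const d1).inter (isClosed_le d1 continuous_const)).inter
      ((isClosed_le continuous_const d2).inter (isClosed_le d2
        (hh.comp (continuous_const.prodMk d1))))).measurableSet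
  rw [slice_integral T F hf hTm (Icc 0 1) measurableSet_Icc
      (fun x => {q : ℝ × ℝ | q.1 ∈ Icc 0 (g x) ∧ q.2 ∈ Icc 0 (h x q.1)}) hUm
      (fun x q => Iff.rfl)]
  refine setIntegral_congr_fun measurableSet_Icc (fun x hx => ?_)
  have hUsub : {q : ℝ × ℝ | q.1 ∈ Icc 0 (g x) ∧ q.2 ∈ Icc 0 (h x q.1)} ⊆
      Icc ((0:ℝ),(0:ℝ)) (1,1) := by
    rintro ⟨y, z⟩ ⟨hy, hz⟩
    simp only [Set.mem_Icc, Prod.le_def] at *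
    exact ⟨⟨hy.1, hz.1⟩, le_trans hy.2 (hg1 x hx), le_trans hz.2 (hh1 x hx y hy)⟩
  have hFx : Continuous fun q : ℝ × ℝ => F (x, q) :=
    hF.comp (continuous_const.prodMk continuous_id)
  have hint2 : IntegrableOn (fun q : ℝ × ℝ => F (x, q))
      {q : ℝ × ℝ | q.1 ∈ Icc 0 (g x) ∧ q.2 ∈ Icc 0 (h x q.1)} :=
    (hFx.continuousOn.integrableOn_compact isCompact_Icc).mono_set hUsub
  rw [slice_integral _ _ ((integrable_indicator_iff (hUm x)).2 hint2) (hUm x)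
      (Icc 0 (g x)) measurableSet_Icc (fun y => Icc 0 (h x y)) (fun y => measurableSet_Icc)
      (fun y z => Iff.rfl)]

/-- Configuration 3 (pentagon cut interface): centroid of the cut region of the
unit cube when `m2 ≤ α ≤ min (m1 + m2) m3`. -/
theorem cut_centroid_config3 (m1 m2 m3 α : ℝ)
    (hm1 : 0 < m1) (hm12 : m1 ≤ m2) (hm23 : m2 ≤ m3)
    (hsum : m1 + m2 + m3 = 1) (hα0 : m2 ≤ α) (hα1 : α ≤ min (m1 + m2) m3)
    (A : ℝ) (hA : A = α ^ 3 - (α - m1) ^ 3 - (α - m2) ^ 3)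
    (S : Set (ℝ × ℝ × ℝ))
    (hS : S = {p : ℝ × ℝ × ℝ | p.1 ∈ Set.Icc 0 1 ∧ p.2.1 ∈ Set.Icc 0 1 ∧
        p.2.2 ∈ Set.Icc 0 1 ∧ m1 * p.1 + m2 * p.2.1 + m3 * p.2.2 ≤ α}) :
    (∫ p in S, p.1) / (volume S).toReal =
      (α ^ 4 - (α - m1) ^ 3 * (α + 3 * m1) - (α - m2) ^ 4) / (4 * m1 * A) ∧
    (∫ p in S, p.2.1) / (volume S).toReal =
      (α ^ 4 - (α - m1) ^ 4 - (α - m2) ^ 3 * (α + 3 * m2)) / (4 * m2 * A) ∧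
    (∫ p in S, p.2.2) / (volume S).toReal =
      (α ^ 4 - (α - m1) ^ 4 - (α - m2) ^ 4) / (4 * m3 * A) := by
  have hm2 : 0 < m2 := lt_of_lt_of_le hm1 hm12
  have hm3 : 0 < m3 := lt_of_lt_of_le hm2 hm23
  have hαpos : 0 < α := lt_of_lt_of_le hm2 hα0
  have hα12 : α ≤ m1 + m2 := le_trans hα1 (min_le_left _ _)
  have hα3 : α ≤ m3 := le_trans hα1 (min_le_right _ _)
  set g : ℝ → ℝ := fun x => min 1 ((α - m1*x)/m2) with hgdef
  set h : ℝ → ℝ → ℝ := fun x y => (α - m1*x - m2*y)/m3 with hhdef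
  have hgc : Continuous g := continuous_const.min
    ((continuous_const.sub (continuous_const.mul continuous_id)).div_const m2)
  have hhc : Continuous fun p : ℝ × ℝ => h p.1 p.2 :=
    ((continuous_const.sub (continuous_const.mul continuous_fst)).sub
      (continuous_const.mul continuous_snd)).div_const m3
  have hg0 : ∀ x ∈ Icc (0:ℝ) 1, 0 ≤ g x := by
    intro x hx
    simp only [Set.mem_Icc] at hx
    exact le_min zero_le_one (div_nonneg (by nlinarith) hm2.le)
  have hg1 : ∀ x ∈ Icc (0:ℝ) 1, g x ≤ 1 := fun x _ => min_le_left _ _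
  have hh0 : ∀ x ∈ Icc (0:ℝ) 1, ∀ y ∈ Icc 0 (g x), 0 ≤ h x y := by
    intro x hx y hy
    simp only [Set.mem_Icc] at hx hy
    have : y ≤ (α - m1*x)/m2 := le_trans hy.2 (min_le_right _ _)
    have : m2 * y ≤ α - m1*x := by
      rw [mul_comm]; exact (le_div_iff₀ hm2).1 this
    exact div_nonneg (by linarith) hm3.le
  have hh1 : ∀ x ∈ Icc (0:ℝ) 1, ∀ y ∈ Icc 0 (g x), h x y ≤ 1 := by
    intro x hx y hy
    simp only [Set.mem_Icc] at hx hy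
    rw [hhdef]
    rw [div_le_one hm3]
    nlinarith [hy.1, hx.1]
  have hSeq : S = {p : ℝ × ℝ × ℝ | p.1 ∈ Icc 0 1 ∧ p.2.1 ∈ Icc 0 (g p.1) ∧
      p.2.2 ∈ Icc 0 (h p.1 p.2.1)} := by
    rw [hS]
    ext ⟨x, y, z⟩
    simp only [Set.mem_setOf_eq, Set.mem_Icc, hgdef, hhdef]
    constructor
    · rintro ⟨⟨hx0, hx1⟩, ⟨hy0, hy1⟩, ⟨hz0, hz1⟩, hle⟩
      refine ⟨⟨hx0, hx1⟩, ⟨hy0, le_min hy1 ?_⟩, hz0, ?_⟩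
      · rw [le_div_iff₀ hm2]; nlinarith
      · rw [le_div_iff₀ hm3]; nlinarith
    · rintro ⟨⟨hx0, hx1⟩, ⟨hy0, hy1⟩, hz0, hz1⟩
      have hy1' : y ≤ 1 := le_trans hy1 (min_le_left _ _)
      have hy2 : y ≤ (α - m1*x)/m2 := le_trans hy1 (min_le_right _ _)
      have hy2' : m2 * y ≤ α - m1*x := by rw [mul_comm]; exact (le_div_iff₀ hm2).1 hy2
      have hz1' : m3 * z ≤ α - m1*x - m2*y := by rw [mul_comm]; exact (le_div_iff₀ hm3).1 hz1
      refine ⟨⟨hx0, hx1⟩, ⟨hy0, hy1'⟩, ⟨hz0, ?_⟩, by linarith⟩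
      nlinarith
  -- basic quantities
  set t : ℝ := (α - m2)/m1 with htdef
  have ht0 : 0 ≤ t := div_nonneg (by linarith) hm1.le
  have ht1 : t ≤ 1 := by rw [htdef, div_le_one hm1]; linarith
  -- generic inner y-integral
  have yint : ∀ x ∈ Icc (0:ℝ) 1, ∀ d0 d1 d2 : ℝ,
      (∫ y in Icc 0 (g x), (d0 + d1*y + d2*y^2)) =
        d0*(g x) + d1*(g x)^2/2 + d2*(g x)^3/3 := by
    intro x hx d0 d1 d2
    rw [integral_Icc_eq_integral_Ioc, ← intervalIntegral.integral_of_le (hg0 x hx),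
      integral_quad]
    ring
  -- inner z-integrals
  have zconst : ∀ x ∈ Icc (0:ℝ) 1, ∀ y ∈ Icc 0 (g x), ∀ c : ℝ,
      (∫ _z in Icc 0 (h x y), c) = c * h x y := by
    intro x hx y hy c
    rw [setIntegral_const, smul_eq_mul, measureReal_def, Real.volume_Icc, sub_zero,
      ENNReal.toReal_ofReal (hh0 x hx y hy), mul_comm]
  have zid : ∀ x ∈ Icc (0:ℝ) 1, ∀ y ∈ Icc 0 (g x),
      (∫ z in Icc 0 (h x y), z) = (h x y)^2/2 := by
    intro x hx y hy
    rw [integral_Icc_eq_integral_Ioc, ← intervalIntegral.integral_of_le (hh0 x hx y hy),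
      integral_id]
    ring
  -- pointwise (in x) closed forms of the double integrals
  have hVx : ∀ x ∈ Icc (0:ℝ) 1, (∫ y in Icc 0 (g x), ∫ z in Icc 0 (h x y), (1:ℝ))
      = ((α - m1*x) * g x - m2 * (g x)^2/2)/m3 := by
    intro x hx
    rw [setIntegral_congr_fun measurableSet_Icc
      (g := fun y => (α - m1*x)/m3 + (-(m2/m3))*y + 0*y^2)
      (fun y hy => by rw [zconst x hx y hy 1, hhdef]; ring)]
    rw [yint x hx]
    ring
  have hXx : ∀ x ∈ Icc (0:ℝ) 1, (∫ y in Icc 0 (g x), ∫ z in Icc 0 (h x y), x)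
      = x * ((α - m1*x) * g x - m2 * (g x)^2/2)/m3 := by
    intro x hx
    rw [setIntegral_congr_fun measurableSet_Icc
      (g := fun y => x*(α - m1*x)/m3 + (-(x*m2/m3))*y + 0*y^2)
      (fun y hy => by rw [zconst x hx y hy x, hhdef]; ring)]
    rw [yint x hx]
    ring
  have hYx : ∀ x ∈ Icc (0:ℝ) 1, (∫ y in Icc 0 (g x), ∫ z in Icc 0 (h x y), y)
      = (α - m1*x) * (g x)^2/(2*m3) - m2 * (g x)^3/(3*m3) := by
    intro x hx
    rw [setIntegral_congr_fun measurableSet_Icc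
      (g := fun y => 0 + ((α - m1*x)/m3)*y + (-(m2/m3))*y^2)
      (fun y hy => by rw [zconst x hx y hy y, hhdef]; ring)]
    rw [yint x hx]
    field_simp
    ring
  have hZx : ∀ x ∈ Icc (0:ℝ) 1, (∫ y in Icc 0 (g x), ∫ z in Icc 0 (h x y), z)
      = (α - m1*x)^2 * g x/(2*m3^2) - (α - m1*x)*m2*(g x)^2/(2*m3^2)
        + m2^2*(g x)^3/(6*m3^2) := by
    intro x hx
    rw [setIntegral_congr_fun measurableSet_Icc
      (g := fun y => (α - m1*x)^2/(2*m3^2) + (-((α - m1*x)*m2/m3^2))*y + (m2^2/(2*m3^2))*y^2)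
      (fun y hy => by rw [zid x hx y hy, hhdef]; field_simp; ring)]
    rw [yint x hx]
    field_simp
    ring
  -- g on the two pieces
  have hgleft : ∀ x ∈ uIcc (0:ℝ) t, g x = 1 := by
    intro x hx
    rw [Set.uIcc_of_le ht0, Set.mem_Icc] at hx
    refine min_eq_left ?_
    rw [le_div_iff₀ hm2]
    have : m1 * x ≤ m1 * t := by nlinarith
    rw [htdef] at this
    rw [mul_div_cancel₀ _ hm1.ne'] at this
    linarith
  have hgright : ∀ x ∈ uIcc t 1, g x = (α - m1*x)/m2 := by
    intro x hx
    rw [Set.uIcc_of_le ht1, Set.mem_Icc] at hx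
    refine min_eq_right ?_
    rw [div_le_one hm2]
    have : m1 * t ≤ m1 * x := by nlinarith
    rw [htdef, mul_div_cancel₀ _ hm1.ne'] at this
    linarith
  -- the x-integration machinery
  have xsplit : ∀ φ : ℝ → ℝ, Continuous φ →
      (∫ x in Icc (0:ℝ) 1, φ x) = (∫ x in (0:ℝ)..t, φ x) + ∫ x in t..(1:ℝ), φ x := by
    intro φ hφ
    rw [integral_Icc_eq_integral_Ioc, ← intervalIntegral.integral_of_le zero_le_one,
      ← intervalIntegral.integral_add_adjacent_intervals
        (hφ.intervalIntegrable 0 t) (hφ.intervalIntegrable t 1)]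
  have hφVc : Continuous fun x : ℝ => ((α - m1*x) * g x - m2 * (g x)^2/2)/m3 :=
    (((continuous_const.sub (continuous_const.mul continuous_id)).mul hgc).sub
      ((continuous_const.mul (hgc.pow 2)).div_const 2)).div_const m3
  -- volume computation
  have keyV : (∫ x in Icc (0:ℝ) 1, ∫ y in Icc 0 (g x), ∫ z in Icc 0 (h x y), (1:ℝ))
      = A/(6*m1*m2*m3) := by
    rw [setIntegral_congr_fun measurableSet_Icc (fun x hx => hVx x hx)]
    rw [xsplit _ hφVc]
    rw [intervalIntegral.integral_congr (a := 0) (b := t)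
      (g := fun x => (α - m2/2)/m3 + (-(m1/m3))*x + 0*x^2 + 0*x^3)
      (fun x hx => by rw [hgleft x hx]; ring)]
    rw [intervalIntegral.integral_congr (a := t) (b := 1)
      (g := fun x => α^2/(2*m2*m3) + (-(α*m1/(m2*m3)))*x + (m1^2/(2*m2*m3))*x^2 + 0*x^3)
      (fun x hx => by rw [hgright x hx]; field_simp; ring)]
    rw [integral_cubic, integral_cubic, hA, htdef]
    field_simp [hm1.ne', hm2.ne', hm3.ne']
    ring
  have hlin : Continuous fun x : ℝ => α - m1*x :=
    continuous_const.sub (continuous_const.mul continuous_id)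
  have hNc : Continuous fun x : ℝ => (α - m1*x) * g x - m2*(g x)^2/2 :=
    (hlin.mul hgc).sub ((continuous_const.mul (hgc.pow 2)).div_const 2)
  have keyX : (∫ x in Icc (0:ℝ) 1, ∫ y in Icc 0 (g x), ∫ z in Icc 0 (h x y), x)
      = (α^4 - (α-m1)^3*(α+3*m1) - (α-m2)^4)/(24*m1^2*m2*m3) := by
    rw [setIntegral_congr_fun measurableSet_Icc (fun x hx => hXx x hx)]
    rw [xsplit (fun x => x * ((α - m1*x) * g x - m2*(g x)^2/2)/m3) ((continuous_id.mul hNc).div_const m3)]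
    rw [intervalIntegral.integral_congr (a := 0) (b := t)
      (g := fun x => 0 + ((α - m2/2)/m3)*x + (-(m1/m3))*x^2 + 0*x^3)
      (fun x hx => by rw [hgleft x hx]; ring)]
    rw [intervalIntegral.integral_congr (a := t) (b := 1)
      (g := fun x => 0 + (α^2/(2*m2*m3))*x + (-(α*m1/(m2*m3)))*x^2 + (m1^2/(2*m2*m3))*x^3)
      (fun x hx => by rw [hgright x hx]; field_simp; ring)]
    rw [integral_cubic, integral_cubic, htdef]
    field_simp [hm1.ne', hm2.ne', hm3.ne']
    ring
  have keyY : (∫ x in Icc (0:ℝ) 1, ∫ y in Icc 0 (g x), ∫ z in Icc 0 (h x y), y)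
      = (α^4 - (α-m1)^4 - (α-m2)^3*(α+3*m2))/(24*m1*m2^2*m3) := by
    rw [setIntegral_congr_fun measurableSet_Icc (fun x hx => hYx x hx)]
    rw [xsplit (fun x => (α - m1*x) * (g x)^2/(2*m3) - m2*(g x)^3/(3*m3)) (((hlin.mul (hgc.pow 2)).div_const (2*m3)).sub
      ((continuous_const.mul (hgc.pow 3)).div_const (3*m3)))]
    rw [intervalIntegral.integral_congr (a := 0) (b := t)
      (g := fun x => (α/2 - m2/3)/m3 + (-(m1/(2*m3)))*x + 0*x^2 + 0*x^3)
      (fun x hx => by rw [hgleft x hx]; field_simp; ring)]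
    rw [intervalIntegral.integral_congr (a := t) (b := 1)
      (g := fun x => α^3/(6*m2^2*m3) + (-(α^2*m1/(2*m2^2*m3)))*x + (α*m1^2/(2*m2^2*m3))*x^2
        + (-(m1^3/(6*m2^2*m3)))*x^3)
      (fun x hx => by rw [hgright x hx]; field_simp; ring)]
    rw [integral_cubic, integral_cubic, htdef]
    field_simp [hm1.ne', hm2.ne', hm3.ne']
    ring
  have keyZ : (∫ x in Icc (0:ℝ) 1, ∫ y in Icc 0 (g x), ∫ z in Icc 0 (h x y), z)
      = (α^4 - (α-m1)^4 - (α-m2)^4)/(24*m1*m2*m3^2) := by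
    rw [setIntegral_congr_fun measurableSet_Icc (fun x hx => hZx x hx)]
    rw [xsplit (fun x => (α - m1*x)^2 * g x/(2*m3^2) - (α - m1*x)*m2*(g x)^2/(2*m3^2) + m2^2*(g x)^3/(6*m3^2)) ((((hlin.pow 2).mul hgc).div_const (2*m3^2)).sub
      (((hlin.mul continuous_const).mul (hgc.pow 2)).div_const (2*m3^2)) |>.add
      ((continuous_const.mul (hgc.pow 3)).div_const (6*m3^2)))]
    rw [intervalIntegral.integral_congr (a := 0) (b := t)
      (g := fun x => (α^2 - α*m2 + m2^2/3)/(2*m3^2) + ((m1*m2 - 2*α*m1)/(2*m3^2))*x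
        + (m1^2/(2*m3^2))*x^2 + 0*x^3)
      (fun x hx => by rw [hgleft x hx]; field_simp; ring)]
    rw [intervalIntegral.integral_congr (a := t) (b := 1)
      (g := fun x => α^3/(6*m2*m3^2) + (-(α^2*m1/(2*m2*m3^2)))*x + (α*m1^2/(2*m2*m3^2))*x^2
        + (-(m1^3/(6*m2*m3^2)))*x^3)
      (fun x hx => by rw [hgright x hx]; field_simp; ring)]
    rw [integral_cubic, integral_cubic, htdef]
    field_simp [hm1.ne', hm2.ne', hm3.ne']
    ring
  have hApos : 0 < A := by
    rw [hA]
    nlinarith [mul_pos (mul_pos hm1 hm2) hαpos, sq_nonneg (α - m2), sq_nonneg (m2 - m1),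
      mul_nonneg (sub_nonneg.2 hα0) (sub_nonneg.2 hm12),
      mul_nonneg (mul_nonneg (sub_nonneg.2 hα0) (sub_nonneg.2 hm12)) hm1.le,
      mul_nonneg (sub_nonneg.2 hα12) (sq_nonneg α),
      mul_nonneg (mul_nonneg (sub_nonneg.2 hα0) (sub_nonneg.2 hα0)) hm1.le,
      mul_nonneg (mul_nonneg (sub_nonneg.2 hα12) (sub_nonneg.2 hα0)) hm2.le,
      mul_nonneg (mul_nonneg (sub_nonneg.2 hα12) (sub_nonneg.2 hm12)) hαpos.le]
  have hVolS : (volume S).toReal = A/(6*m1*m2*m3) := by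
    have h1 : ∫ _p in S, (1:ℝ) = (volume S).toReal := by
      rw [setIntegral_const, smul_eq_mul, mul_one, measureReal_def]
    rw [← h1, hSeq]
    exact (iterated_reduce g h hgc hhc hg1 hh1 (fun _ => (1:ℝ)) continuous_const).trans keyV
  have eX : (∫ p in S, p.1) = (α^4 - (α-m1)^3*(α+3*m1) - (α-m2)^4)/(24*m1^2*m2*m3) := by
    rw [hSeq]
    exact (iterated_reduce g h hgc hhc hg1 hh1 (fun p => p.1) continuous_fst).trans keyX
  have eY : (∫ p in S, p.2.1) = (α^4 - (α-m1)^4 - (α-m2)^3*(α+3*m2))/(24*m1*m2^2*m3) := by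
    rw [hSeq]
    exact (iterated_reduce g h hgc hhc hg1 hh1 (fun p => p.2.1)
      (continuous_fst.comp continuous_snd)).trans keyY
  have eZ : (∫ p in S, p.2.2) = (α^4 - (α-m1)^4 - (α-m2)^4)/(24*m1*m2*m3^2) := by
    rw [hSeq]
    exact (iterated_reduce g h hgc hhc hg1 hh1 (fun p => p.2.2)
      (continuous_snd.comp continuous_snd)).trans keyZ
  refine ⟨?_, ?_, ?_⟩
  · rw [eX, hVolS]
    field_simp [hm1.ne', hm2.ne', hm3.ne', hApos.ne']
    ring
  · rw [eY, hVolS]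
    field_simp [hm1.ne', hm2.ne', hm3.ne', hApos.ne']
    ring
  · rw [eZ, hVolS]
    field_simp [hm1.ne', hm2.ne', hm3.ne', hApos.ne']
    ring
end

section
/- Let 0 < m1 ≤ m2 ≤ m3 with m1 + m2 + m3 = 1, assume m3 ≤ m1 + m2, and let m3 ≤ α ≤ 1/2. Then the three-dimensional Lebesgue measure of the cut region S(α) = {x ∈ [0,1]³ : m1·x1 + m2·x2 + m3·x3 ≤ α} equals (α³ − (α − m1)³ − (α − m2)³ − (α − m3)³)/(6·m1·m2·m3). -/
open MeasureTheory Set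

lemma cut_vol1 (d c : ℝ) (hd : 0 < d) :
    volume {y : ℝ | 0 ≤ y ∧ d*y ≤ c} = ENNReal.ofReal (c/d) := by
  have : {y : ℝ | 0 ≤ y ∧ d*y ≤ c} = Icc 0 (c/d) := by
    ext y; simp [le_div_iff₀ hd, mul_comm]
  rw [this, Real.volume_Icc, sub_zero]

lemma cut_meas2 (b d c : ℝ) :
    MeasurableSet {p : ℝ×ℝ | 0 ≤ p.1 ∧ 0 ≤ p.2 ∧ b*p.1 + d*p.2 ≤ c} := by
  apply MeasurableSet.inter
  · exact measurableSet_le measurable_const measurable_fst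
  apply MeasurableSet.inter
  · exact measurableSet_le measurable_const measurable_snd
  · exact measurableSet_le ((measurable_fst.const_mul b).add (measurable_snd.const_mul d))
      measurable_const

lemma cut_vol2 (b d c : ℝ) (hb : 0 < b) (hd : 0 < d) (hc : 0 ≤ c) :
    volume {p : ℝ×ℝ | 0 ≤ p.1 ∧ 0 ≤ p.2 ∧ b*p.1 + d*p.2 ≤ c} =
      ENNReal.ofReal (c^2/(2*b*d)) := by
  rw [Measure.volume_eq_prod, Measure.prod_apply (cut_meas2 b d c)]
  have h1 : ∀ x : ℝ, (volume (Prod.mk x ⁻¹' {p : ℝ×ℝ | 0 ≤ p.1 ∧ 0 ≤ p.2 ∧ b*p.1 + d*p.2 ≤ c}))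
      = (Icc (0:ℝ) (c/b)).indicator (fun x => ENNReal.ofReal ((c - b*x)/d)) x := by
    intro x
    rcases le_or_gt 0 x with hx | hx
    · have hpre : Prod.mk x ⁻¹' {p : ℝ×ℝ | 0 ≤ p.1 ∧ 0 ≤ p.2 ∧ b*p.1 + d*p.2 ≤ c}
          = {y : ℝ | 0 ≤ y ∧ d*y ≤ c - b*x} := by
        ext y; simp only [mem_preimage, mem_setOf_eq]; constructor
        · rintro ⟨_, h2, h3⟩; exact ⟨h2, by linarith⟩
        · rintro ⟨h2, h3⟩; exact ⟨hx, h2, by linarith⟩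
      rw [hpre, cut_vol1 d _ hd]
      rcases le_or_gt x (c/b) with hxc | hxc
      · rw [Set.indicator_of_mem (show x ∈ Icc (0:ℝ) (c/b) from ⟨hx, hxc⟩)]
      · rw [indicator_of_notMem (by simp [hxc.not_ge])]
        have h2 : c - b*x < 0 := by nlinarith [(div_lt_iff₀ hb).1 hxc]
        rw [ENNReal.ofReal_eq_zero]
        exact div_nonpos_of_nonpos_of_nonneg h2.le hd.le
    · have hpre : Prod.mk x ⁻¹' {p : ℝ×ℝ | 0 ≤ p.1 ∧ 0 ≤ p.2 ∧ b*p.1 + d*p.2 ≤ c} = ∅ := by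
        ext y; simp only [mem_preimage, mem_setOf_eq, mem_empty_iff_false, iff_false]
        rintro ⟨h1, _⟩; exact hx.not_ge h1
      rw [hpre, indicator_of_notMem (by simp [hx.not_ge])]
      simp
  simp_rw [h1]
  rw [lintegral_indicator measurableSet_Icc]
  have hcb : (0:ℝ) ≤ c/b := div_nonneg hc hb.le
  have hint : IntegrableOn (fun x => (c - b*x)/d) (Icc 0 (c/b)) volume := by
    apply ContinuousOn.integrableOn_compact isCompact_Icc
    fun_prop
  rw [← ofReal_integral_eq_lintegral_ofReal hint]
  · congr 1
    rw [integral_Icc_eq_integral_Ioc, ← intervalIntegral.integral_of_le hcb]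
    have : ∀ x : ℝ, (c - b*x)/d = c/d - (b/d)*x := by intro x; field_simp
    simp_rw [this]
    rw [intervalIntegral.integral_sub intervalIntegrable_const
        ((intervalIntegral.intervalIntegrable_id).const_mul _),
      intervalIntegral.integral_const, intervalIntegral.integral_const_mul, integral_id]
    simp only [smul_eq_mul]
    field_simp
    ring
  · filter_upwards [self_mem_ae_restrict measurableSet_Icc] with x hx
    have h1 : b*x ≤ c := by nlinarith [(le_div_iff₀ hb).1 hx.2]
    have h2 : 0 ≤ c - b*x := by linarith
    positivity

lemma cut_meas3 (a b d c : ℝ) :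
    MeasurableSet {p : ℝ×ℝ×ℝ | 0 ≤ p.1 ∧ 0 ≤ p.2.1 ∧ 0 ≤ p.2.2 ∧
      a*p.1 + b*p.2.1 + d*p.2.2 ≤ c} := by
  apply MeasurableSet.inter
  · exact measurableSet_le measurable_const measurable_fst
  apply MeasurableSet.inter
  · exact measurableSet_le measurable_const measurable_snd.fst
  apply MeasurableSet.inter
  · exact measurableSet_le measurable_const measurable_snd.snd
  · exact measurableSet_le
      (((measurable_fst.const_mul a).add (measurable_snd.fst.const_mul b)).add
        (measurable_snd.snd.const_mul d)) measurable_const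

lemma cut_vol3 (a b d c : ℝ) (ha : 0 < a) (hb : 0 < b) (hd : 0 < d) (hc : 0 ≤ c) :
    volume {p : ℝ×ℝ×ℝ | 0 ≤ p.1 ∧ 0 ≤ p.2.1 ∧ 0 ≤ p.2.2 ∧ a*p.1 + b*p.2.1 + d*p.2.2 ≤ c} =
      ENNReal.ofReal (c^3/(6*a*b*d)) := by
  rw [Measure.volume_eq_prod, Measure.prod_apply (cut_meas3 a b d c)]
  have h1 : ∀ x : ℝ, (volume (Prod.mk x ⁻¹'
        {p : ℝ×ℝ×ℝ | 0 ≤ p.1 ∧ 0 ≤ p.2.1 ∧ 0 ≤ p.2.2 ∧ a*p.1 + b*p.2.1 + d*p.2.2 ≤ c}))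
      = (Icc (0:ℝ) (c/a)).indicator (fun x => ENNReal.ofReal ((c - a*x)^2/(2*b*d))) x := by
    intro x
    rcases le_or_gt 0 x with hx | hx
    · have hpre : Prod.mk x ⁻¹'
          {p : ℝ×ℝ×ℝ | 0 ≤ p.1 ∧ 0 ≤ p.2.1 ∧ 0 ≤ p.2.2 ∧ a*p.1 + b*p.2.1 + d*p.2.2 ≤ c}
          = {q : ℝ×ℝ | 0 ≤ q.1 ∧ 0 ≤ q.2 ∧ b*q.1 + d*q.2 ≤ c - a*x} := by
        ext q; simp only [mem_preimage, mem_setOf_eq]; constructor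
        · rintro ⟨_, h2, h3, h4⟩; exact ⟨h2, h3, by linarith⟩
        · rintro ⟨h2, h3, h4⟩; exact ⟨hx, h2, h3, by linarith⟩
      rcases le_or_gt x (c/a) with hxc | hxc
      · have hca : 0 ≤ c - a*x := by nlinarith [(le_div_iff₀ ha).1 hxc]
        rw [hpre, cut_vol2 b d _ hb hd hca,
          Set.indicator_of_mem (show x ∈ Icc (0:ℝ) (c/a) from ⟨hx, hxc⟩)]
      · have hca : c - a*x < 0 := by nlinarith [(div_lt_iff₀ ha).1 hxc]
        have hemp : {q : ℝ×ℝ | 0 ≤ q.1 ∧ 0 ≤ q.2 ∧ b*q.1 + d*q.2 ≤ c - a*x} = ∅ := by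
          ext q; simp only [mem_setOf_eq, mem_empty_iff_false, iff_false]
          rintro ⟨h2, h3, h4⟩; nlinarith
        rw [hpre, hemp, indicator_of_notMem (by simp [hxc.not_ge])]
        simp
    · have hpre : Prod.mk x ⁻¹'
          {p : ℝ×ℝ×ℝ | 0 ≤ p.1 ∧ 0 ≤ p.2.1 ∧ 0 ≤ p.2.2 ∧ a*p.1 + b*p.2.1 + d*p.2.2 ≤ c}
          = ∅ := by
        ext q; simp only [mem_preimage, mem_setOf_eq, mem_empty_iff_false, iff_false]
        rintro ⟨h1, _⟩; exact hx.not_ge h1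
      rw [hpre, indicator_of_notMem (by simp [hx.not_ge])]
      simp
  simp_rw [h1]
  rw [lintegral_indicator measurableSet_Icc]
  have hca : (0:ℝ) ≤ c/a := div_nonneg hc ha.le
  have hint : IntegrableOn (fun x => (c - a*x)^2/(2*b*d)) (Icc 0 (c/a)) volume := by
    apply ContinuousOn.integrableOn_compact isCompact_Icc
    fun_prop
  rw [← ofReal_integral_eq_lintegral_ofReal hint]
  · congr 1
    rw [integral_Icc_eq_integral_Ioc, ← intervalIntegral.integral_of_le hca]
    have hrw : ∀ x : ℝ, (c - a*x)^2/(2*b*d)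
        = c^2/(2*b*d) - (2*a*c/(2*b*d))*x + (a^2/(2*b*d))*x^2 := by
      intro x; field_simp; ring
    simp_rw [hrw]
    have i1 : IntervalIntegrable (fun x : ℝ => c^2/(2*b*d) - (2*a*c/(2*b*d))*x) volume 0 (c/a) :=
      intervalIntegrable_const.sub ((intervalIntegral.intervalIntegrable_id).const_mul _)
    have i2 : IntervalIntegrable (fun x : ℝ => (a^2/(2*b*d))*x^2) volume 0 (c/a) :=
      (intervalIntegral.intervalIntegrable_pow 2).const_mul _
    rw [intervalIntegral.integral_add i1 i2,
      intervalIntegral.integral_sub intervalIntegrable_const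
        ((intervalIntegral.intervalIntegrable_id).const_mul _),
      intervalIntegral.integral_const, intervalIntegral.integral_const_mul,
      intervalIntegral.integral_const_mul, integral_id, integral_pow]
    simp only [smul_eq_mul, div_pow]
    field_simp
    ring
  · filter_upwards [self_mem_ae_restrict measurableSet_Icc] with x hx
    positivity

lemma cut_translate (s : Set (ℝ×ℝ×ℝ)) (v : ℝ×ℝ×ℝ) :
    volume ((fun x => v + x) ⁻¹' s) = volume s := by
  rw [Measure.volume_eq_prod, Measure.volume_eq_prod]
  haveI : ((volume : Measure ℝ).prod (volume : Measure ℝ)).IsAddLeftInvariant :=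
    Measure.prod.instIsAddLeftInvariant
  haveI : ((volume : Measure ℝ).prod ((volume : Measure ℝ).prod (volume : Measure ℝ))).IsAddLeftInvariant :=
    Measure.prod.instIsAddLeftInvariant
  exact measure_preimage_add _ v s

lemma cut_null1 : volume {p : ℝ×ℝ×ℝ | p.1 = 0} = 0 := by
  have : {p : ℝ×ℝ×ℝ | p.1 = 0} = ({0} : Set ℝ) ×ˢ (univ : Set (ℝ×ℝ)) := by
    ext p; simp only [Set.mem_prod, mem_setOf_eq, mem_singleton_iff, mem_univ, and_true]
  rw [this, Measure.volume_eq_prod, Measure.prod_prod]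
  simp

lemma cut_null2 : volume {p : ℝ×ℝ×ℝ | p.2.1 = 0} = 0 := by
  have : {p : ℝ×ℝ×ℝ | p.2.1 = 0} = (univ : Set ℝ) ×ˢ (({0} : Set ℝ) ×ˢ (univ : Set ℝ)) := by
    ext p; simp only [Set.mem_prod, mem_setOf_eq, mem_singleton_iff, mem_univ, true_and, and_true]
  rw [this, Measure.volume_eq_prod, Measure.prod_prod, Measure.volume_eq_prod,
    Measure.prod_prod]
  simp

lemma cut_null3 : volume {p : ℝ×ℝ×ℝ | p.2.2 = 0} = 0 := by
  have : {p : ℝ×ℝ×ℝ | p.2.2 = 0} = (univ : Set ℝ) ×ˢ ((univ : Set ℝ) ×ˢ ({0} : Set ℝ)) := by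
    ext p; simp only [Set.mem_prod, mem_setOf_eq, mem_singleton_iff, mem_univ, true_and]
  rw [this, Measure.volume_eq_prod, Measure.prod_prod, Measure.volume_eq_prod,
    Measure.prod_prod]
  simp

/-- volume of an "open in one coordinate" simplex equals the closed one. -/
lemma cut_vol3_open (a b d c : ℝ) (ha : 0 < a) (hb : 0 < b) (hd : 0 < d) (hc : 0 ≤ c)
    (S : Set (ℝ×ℝ×ℝ))
    (hsub : S ⊆ {p : ℝ×ℝ×ℝ | 0 ≤ p.1 ∧ 0 ≤ p.2.1 ∧ 0 ≤ p.2.2 ∧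
      a*p.1 + b*p.2.1 + d*p.2.2 ≤ c})
    (Z : Set (ℝ×ℝ×ℝ)) (hZ : volume Z = 0)
    (hsup : {p : ℝ×ℝ×ℝ | 0 ≤ p.1 ∧ 0 ≤ p.2.1 ∧ 0 ≤ p.2.2 ∧
      a*p.1 + b*p.2.1 + d*p.2.2 ≤ c} ⊆ S ∪ Z) :
    volume S = ENNReal.ofReal (c^3/(6*a*b*d)) := by
  rw [← cut_vol3 a b d c ha hb hd hc]
  refine le_antisymm (measure_mono hsub) ?_
  calc volume {p : ℝ×ℝ×ℝ | 0 ≤ p.1 ∧ 0 ≤ p.2.1 ∧ 0 ≤ p.2.2 ∧ a*p.1 + b*p.2.1 + d*p.2.2 ≤ c}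
      ≤ volume (S ∪ Z) := measure_mono hsup
    _ ≤ volume S + volume Z := measure_union_le S Z
    _ = volume S := by rw [hZ, add_zero]

/-- Configuration 4 (hexagon cut interface): volume of the cut region of the
unit cube when `m3 ≤ m1 + m2` and `m3 ≤ α ≤ 1/2`. -/
theorem cut_volume_config4 (m1 m2 m3 α : ℝ)
    (hm1 : 0 < m1) (hm12 : m1 ≤ m2) (hm23 : m2 ≤ m3)
    (hsum : m1 + m2 + m3 = 1) (hcfg : m3 ≤ m1 + m2)
    (hα0 : m3 ≤ α) (hα1 : α ≤ 1 / 2) :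
    volume {p : ℝ × ℝ × ℝ | p.1 ∈ Set.Icc 0 1 ∧ p.2.1 ∈ Set.Icc 0 1 ∧
        p.2.2 ∈ Set.Icc 0 1 ∧ m1 * p.1 + m2 * p.2.1 + m3 * p.2.2 ≤ α} =
      ENNReal.ofReal ((α ^ 3 - (α - m1) ^ 3 - (α - m2) ^ 3 - (α - m3) ^ 3) /
        (6 * m1 * m2 * m3)) := by
  have hm2 : 0 < m2 := lt_of_lt_of_le hm1 hm12
  have hm3 : 0 < m3 := lt_of_lt_of_le hm2 hm23
  have hαm3 : 0 ≤ α - m3 := by linarith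
  have hαm2 : 0 ≤ α - m2 := by linarith
  have hαm1 : 0 ≤ α - m1 := by linarith
  have hα : 0 ≤ α := by linarith
  have hhalf : 1/2 ≤ m1 + m2 := by linarith
  set Q : Set (ℝ×ℝ×ℝ) := {p : ℝ × ℝ × ℝ | p.1 ∈ Set.Icc 0 1 ∧ p.2.1 ∈ Set.Icc 0 1 ∧
      p.2.2 ∈ Set.Icc 0 1 ∧ m1 * p.1 + m2 * p.2.1 + m3 * p.2.2 ≤ α} with hQdef
  set T0 : Set (ℝ×ℝ×ℝ) := {p : ℝ×ℝ×ℝ | 0 ≤ p.1 ∧ 0 ≤ p.2.1 ∧ 0 ≤ p.2.2 ∧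
      m1*p.1 + m2*p.2.1 + m3*p.2.2 ≤ α} with hT0def
  set T1 : Set (ℝ×ℝ×ℝ) := T0 ∩ {p : ℝ×ℝ×ℝ | 1 < p.1} with hT1def
  set T2 : Set (ℝ×ℝ×ℝ) := T0 ∩ {p : ℝ×ℝ×ℝ | 1 < p.2.1} with hT2def
  set T3 : Set (ℝ×ℝ×ℝ) := T0 ∩ {p : ℝ×ℝ×ℝ | 1 < p.2.2} with hT3def
  have mT0 : MeasurableSet T0 := cut_meas3 m1 m2 m3 α
  have mT1 : MeasurableSet T1 :=
    mT0.inter (measurableSet_lt measurable_const measurable_fst)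
  have mT2 : MeasurableSet T2 :=
    mT0.inter (measurableSet_lt measurable_const measurable_snd.fst)
  have mT3 : MeasurableSet T3 :=
    mT0.inter (measurableSet_lt measurable_const measurable_snd.snd)
  -- splitting
  have hsplit : Q ∪ (T1 ∪ (T2 ∪ T3)) = T0 := by
    ext p
    simp only [hQdef, hT1def, hT2def, hT3def, hT0def, mem_union, mem_inter_iff, mem_setOf_eq,
      mem_Icc]
    constructor
    · rintro (⟨⟨h1, _⟩, ⟨h2, _⟩, ⟨h3, _⟩, h4⟩ | ⟨h, _⟩ | ⟨h, _⟩ | ⟨h, _⟩)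
      · exact ⟨h1, h2, h3, h4⟩
      · exact h
      · exact h
      · exact h
    · rintro ⟨h1, h2, h3, h4⟩
      rcases le_or_gt p.1 1 with c1 | c1
      · rcases le_or_gt p.2.1 1 with c2 | c2
        · rcases le_or_gt p.2.2 1 with c3 | c3
          · exact Or.inl ⟨⟨h1, c1⟩, ⟨h2, c2⟩, ⟨h3, c3⟩, h4⟩
          · exact Or.inr (Or.inr (Or.inr ⟨⟨h1, h2, h3, h4⟩, c3⟩))
        · exact Or.inr (Or.inr (Or.inl ⟨⟨h1, h2, h3, h4⟩, c2⟩))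
      · exact Or.inr (Or.inl ⟨⟨h1, h2, h3, h4⟩, c1⟩)
  -- disjointness
  have hdQ : Disjoint Q (T1 ∪ (T2 ∪ T3)) := by
    rw [Set.disjoint_left]
    rintro p ⟨⟨_, h1⟩, ⟨_, h2⟩, ⟨_, h3⟩, _⟩ (⟨_, c⟩ | ⟨_, c⟩ | ⟨_, c⟩) <;>
      simp only [mem_setOf_eq] at c <;> linarith
  have hd12 : Disjoint T1 (T2 ∪ T3) := by
    rw [Set.disjoint_left]
    rintro p ⟨⟨h1, h2, h3, h4⟩, c1⟩ (⟨_, c⟩ | ⟨_, c⟩) <;> simp only [mem_setOf_eq] at c c1 <;>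
      nlinarith
  have hd23 : Disjoint T2 T3 := by
    rw [Set.disjoint_left]
    rintro p ⟨⟨h1, h2, h3, h4⟩, c1⟩ ⟨_, c⟩
    simp only [mem_setOf_eq] at c c1
    nlinarith
  -- volumes of the corner tetrahedra
  have hv1 : volume T1 = ENNReal.ofReal ((α - m1)^3/(6*m1*m2*m3)) := by
    rw [← cut_translate T1 ((1:ℝ), (0:ℝ), (0:ℝ))]
    have hpre : (fun x => ((1:ℝ), (0:ℝ), (0:ℝ)) + x) ⁻¹' T1 =
        {p : ℝ×ℝ×ℝ | 0 < p.1 ∧ 0 ≤ p.2.1 ∧ 0 ≤ p.2.2 ∧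
          m1*p.1 + m2*p.2.1 + m3*p.2.2 ≤ α - m1} := by
      ext p
      simp only [hT1def, hT0def, mem_preimage, mem_inter_iff, mem_setOf_eq, Prod.fst_add,
        Prod.snd_add, Prod.mk_add_mk]
      constructor
      · rintro ⟨⟨_, h2, h3, h4⟩, c1⟩
        refine ⟨by linarith, by linarith, by linarith, by linarith⟩
      · rintro ⟨h1, h2, h3, h4⟩
        refine ⟨⟨by linarith, by linarith, by linarith, by linarith⟩, by linarith⟩
    rw [hpre]
    refine cut_vol3_open m1 m2 m3 (α - m1) hm1 hm2 hm3 hαm1 _ ?_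
      {p : ℝ×ℝ×ℝ | p.1 = 0} cut_null1 ?_
    · rintro p ⟨h1, h2, h3, h4⟩; exact ⟨h1.le, h2, h3, h4⟩
    · rintro p ⟨h1, h2, h3, h4⟩
      rcases eq_or_lt_of_le h1 with h | h
      · exact Or.inr h.symm
      · exact Or.inl ⟨h, h2, h3, h4⟩
  have hv2 : volume T2 = ENNReal.ofReal ((α - m2)^3/(6*m1*m2*m3)) := by
    rw [← cut_translate T2 ((0:ℝ), (1:ℝ), (0:ℝ))]
    have hpre : (fun x => ((0:ℝ), (1:ℝ), (0:ℝ)) + x) ⁻¹' T2 =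
        {p : ℝ×ℝ×ℝ | 0 ≤ p.1 ∧ 0 < p.2.1 ∧ 0 ≤ p.2.2 ∧
          m1*p.1 + m2*p.2.1 + m3*p.2.2 ≤ α - m2} := by
      ext p
      simp only [hT2def, hT0def, mem_preimage, mem_inter_iff, mem_setOf_eq, Prod.fst_add,
        Prod.snd_add, Prod.mk_add_mk]
      constructor
      · rintro ⟨⟨h1, _, h3, h4⟩, c1⟩
        refine ⟨by linarith, by linarith, by linarith, by linarith⟩
      · rintro ⟨h1, h2, h3, h4⟩
        refine ⟨⟨by linarith, by linarith, by linarith, by linarith⟩, by linarith⟩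
    rw [hpre]
    have hgoal : volume {p : ℝ×ℝ×ℝ | 0 ≤ p.1 ∧ 0 < p.2.1 ∧ 0 ≤ p.2.2 ∧
        m1*p.1 + m2*p.2.1 + m3*p.2.2 ≤ α - m2} =
        ENNReal.ofReal ((α - m2)^3/(6*m1*m2*m3)) := by
      refine cut_vol3_open m1 m2 m3 (α - m2) hm1 hm2 hm3 hαm2 _ ?_
        {p : ℝ×ℝ×ℝ | p.2.1 = 0} cut_null2 ?_
      · rintro p ⟨h1, h2, h3, h4⟩; exact ⟨h1, h2.le, h3, h4⟩
      · rintro p ⟨h1, h2, h3, h4⟩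
        rcases eq_or_lt_of_le h2 with h | h
        · exact Or.inr h.symm
        · exact Or.inl ⟨h1, h, h3, h4⟩
    exact hgoal
  have hv3 : volume T3 = ENNReal.ofReal ((α - m3)^3/(6*m1*m2*m3)) := by
    rw [← cut_translate T3 ((0:ℝ), (0:ℝ), (1:ℝ))]
    have hpre : (fun x => ((0:ℝ), (0:ℝ), (1:ℝ)) + x) ⁻¹' T3 =
        {p : ℝ×ℝ×ℝ | 0 ≤ p.1 ∧ 0 ≤ p.2.1 ∧ 0 < p.2.2 ∧
          m1*p.1 + m2*p.2.1 + m3*p.2.2 ≤ α - m3} := by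
      ext p
      simp only [hT3def, hT0def, mem_preimage, mem_inter_iff, mem_setOf_eq, Prod.fst_add,
        Prod.snd_add, Prod.mk_add_mk]
      constructor
      · rintro ⟨⟨h1, h2, _, h4⟩, c1⟩
        refine ⟨by linarith, by linarith, by linarith, by linarith⟩
      · rintro ⟨h1, h2, h3, h4⟩
        refine ⟨⟨by linarith, by linarith, by linarith, by linarith⟩, by linarith⟩
    rw [hpre]
    refine cut_vol3_open m1 m2 m3 (α - m3) hm1 hm2 hm3 hαm3 _ ?_
      {p : ℝ×ℝ×ℝ | p.2.2 = 0} cut_null3 ?_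
    · rintro p ⟨h1, h2, h3, h4⟩; exact ⟨h1, h2, h3.le, h4⟩
    · rintro p ⟨h1, h2, h3, h4⟩
      rcases eq_or_lt_of_le h3 with h | h
      · exact Or.inr h.symm
      · exact Or.inl ⟨h1, h2, h, h4⟩
  -- total volume
  have hv0 : volume T0 = ENNReal.ofReal (α^3/(6*m1*m2*m3)) :=
    cut_vol3 m1 m2 m3 α hm1 hm2 hm3 hα
  have hkey : volume Q + ENNReal.ofReal ((α - m1)^3/(6*m1*m2*m3) +
      ((α - m2)^3/(6*m1*m2*m3) + (α - m3)^3/(6*m1*m2*m3))) =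
      ENNReal.ofReal (α^3/(6*m1*m2*m3)) := by
    rw [← hv0, ← hsplit, measure_union hdQ (mT1.union (mT2.union mT3)),
      measure_union hd12 (mT2.union mT3), measure_union hd23 mT3, hv1, hv2, hv3,
      ENNReal.ofReal_add (by positivity) (by positivity),
      ENNReal.ofReal_add (by positivity) (by positivity)]
  have hQ : volume Q = ENNReal.ofReal (α^3/(6*m1*m2*m3)) -
      ENNReal.ofReal ((α - m1)^3/(6*m1*m2*m3) +
        ((α - m2)^3/(6*m1*m2*m3) + (α - m3)^3/(6*m1*m2*m3))) :=
    ENNReal.eq_sub_of_add_eq ENNReal.ofReal_ne_top hkey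
  rw [hQ, ← ENNReal.ofReal_sub _ (by positivity)]
  congr 1
  ring
end

section
/- Let 0 < m1 ≤ m2 ≤ m3 with m1 + m2 + m3 = 1, assume m1 + m2 < m3, and let m1 + m2 ≤ α ≤ 1/2. Then the three-dimensional Lebesgue measure of the cut region S(α) = {x ∈ [0,1]³ : m1·x1 + m2·x2 + m3·x3 ≤ α} equals (2·α − m1 − m2)/(2·m3). -/
open MeasureTheory

lemma cut_helper (a b m : ℝ) (hm : 0 < m)
    (h : ∀ x ∈ Set.Icc (0:ℝ) 1, 0 ≤ a - b * x) :
    ∫⁻ x in Set.Icc (0:ℝ) 1, ENNReal.ofReal ((a - b * x) / m) =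
      ENNReal.ofReal ((a - b / 2) / m) := by
  have hint : IntegrableOn (fun x : ℝ => (a - b * x) / m) (Set.Icc 0 1) volume := by
    apply Continuous.integrableOn_Icc
    continuity
  rw [← ofReal_integral_eq_lintegral_ofReal hint
      (MeasureTheory.ae_restrict_of_forall_mem measurableSet_Icc
        (fun x hx => div_nonneg (h x hx) hm.le))]
  congr 1
  rw [MeasureTheory.integral_Icc_eq_integral_Ioc,
      ← intervalIntegral.integral_of_le (zero_le_one)]
  have h1 : ∫ x in (0:ℝ)..1, (a - b * x) / m
      = (∫ x in (0:ℝ)..1, (a - b * x)) / m := intervalIntegral.integral_div ..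
  rw [h1, intervalIntegral.integral_sub intervalIntegrable_const
      ((intervalIntegral.intervalIntegrable_id).const_mul b)]
  rw [intervalIntegral.integral_const_mul, integral_id, intervalIntegral.integral_const]
  norm_num
  ring

/-- Configuration 5 (second quadrilateral cut interface): volume of the cut
region of the unit cube when `m1 + m2 < m3` and `m1 + m2 ≤ α ≤ 1/2`. -/
theorem cut_volume_config5 (m1 m2 m3 α : ℝ)
    (hm1 : 0 < m1) (hm12 : m1 ≤ m2) (hm23 : m2 ≤ m3)
    (hsum : m1 + m2 + m3 = 1) (hcfg : m1 + m2 < m3)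
    (hα0 : m1 + m2 ≤ α) (hα1 : α ≤ 1 / 2) :
    volume {p : ℝ × ℝ × ℝ | p.1 ∈ Set.Icc 0 1 ∧ p.2.1 ∈ Set.Icc 0 1 ∧
        p.2.2 ∈ Set.Icc 0 1 ∧ m1 * p.1 + m2 * p.2.1 + m3 * p.2.2 ≤ α} =
      ENNReal.ofReal ((2 * α - m1 - m2) / (2 * m3)) := by
  have hm2 : 0 < m2 := hm1.trans_le hm12
  have hm3 : 0 < m3 := hm2.trans_le hm23
  have hm3half : 1 / 2 < m3 := by linarith
  -- rewrite the set as a subgraph set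
  have hSeq : {p : ℝ × ℝ × ℝ | p.1 ∈ Set.Icc 0 1 ∧ p.2.1 ∈ Set.Icc 0 1 ∧
        p.2.2 ∈ Set.Icc 0 1 ∧ m1 * p.1 + m2 * p.2.1 + m3 * p.2.2 ≤ α} =
      {p : ℝ × ℝ × ℝ | p.1 ∈ Set.Icc 0 1 ∧ p.2.1 ∈ Set.Icc 0 1 ∧
        p.2.2 ∈ Set.Icc 0 ((α - m1 * p.1 - m2 * p.2.1) / m3)} := by
    ext ⟨x, y, z⟩
    simp only [Set.mem_setOf_eq, Set.mem_Icc]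
    constructor
    · rintro ⟨hx, hy, hz, hle⟩
      refine ⟨hx, hy, hz.1, ?_⟩
      rw [le_div_iff₀ hm3]
      nlinarith
    · rintro ⟨hx, hy, hz0, hzf⟩
      have h1 : z * m3 ≤ α - m1 * x - m2 * y := (le_div_iff₀ hm3).mp hzf
      have h2 : 0 ≤ m1 * x := mul_nonneg hm1.le hx.1
      have h3 : 0 ≤ m2 * y := mul_nonneg hm2.le hy.1
      refine ⟨hx, hy, ⟨hz0, ?_⟩, by nlinarith⟩
      nlinarith
  rw [hSeq]
  set S : Set (ℝ × ℝ × ℝ) := {p : ℝ × ℝ × ℝ | p.1 ∈ Set.Icc 0 1 ∧ p.2.1 ∈ Set.Icc 0 1 ∧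
        p.2.2 ∈ Set.Icc 0 ((α - m1 * p.1 - m2 * p.2.1) / m3)} with hS
  have hSm : MeasurableSet S := by
    have : S = (Set.Icc 0 1 ×ˢ (Set.Icc 0 1 ×ˢ Set.univ)) ∩
        {p : ℝ × ℝ × ℝ | 0 ≤ p.2.2} ∩
        {p : ℝ × ℝ × ℝ | p.2.2 ≤ (α - m1 * p.1 - m2 * p.2.1) / m3} := by
      ext ⟨x, y, z⟩
      simp [hS, Set.mem_Icc, and_assoc]
    rw [this]
    refine (((measurableSet_Icc.prod (measurableSet_Icc.prod MeasurableSet.univ)).inter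
      ?_).inter ?_)
    · exact measurableSet_le measurable_const (measurable_snd.snd)
    · exact measurableSet_le (measurable_snd.snd)
        (((measurable_const.sub ((measurable_fst).const_mul m1)).sub
          ((measurable_fst.comp measurable_snd).const_mul m2)).div_const m3)
  rw [Measure.volume_eq_prod, Measure.prod_apply hSm]
  have hslice : ∀ x : ℝ, (volume : Measure (ℝ × ℝ)) (Prod.mk x ⁻¹' S) =
      Set.indicator (Set.Icc (0:ℝ) 1)
        (fun x => ENNReal.ofReal ((α - m1 * x - m2 / 2) / m3)) x := by
    intro x
    by_cases hx : x ∈ Set.Icc (0:ℝ) 1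
    · rw [Set.indicator_of_mem hx]
      have hpre : Prod.mk x ⁻¹' S =
          {q : ℝ × ℝ | q.1 ∈ Set.Icc (0:ℝ) 1 ∧
            q.2 ∈ Set.Icc 0 ((α - m1 * x - m2 * q.1) / m3)} := by
        ext ⟨y, z⟩; simp [hS, Set.mem_Icc, hx.1, hx.2]
      rw [hpre]
      have hTm : MeasurableSet {q : ℝ × ℝ | q.1 ∈ Set.Icc (0:ℝ) 1 ∧
            q.2 ∈ Set.Icc 0 ((α - m1 * x - m2 * q.1) / m3)} := by
        have : {q : ℝ × ℝ | q.1 ∈ Set.Icc (0:ℝ) 1 ∧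
              q.2 ∈ Set.Icc 0 ((α - m1 * x - m2 * q.1) / m3)} =
            (Set.Icc (0:ℝ) 1 ×ˢ (Set.univ : Set ℝ)) ∩ {q : ℝ × ℝ | 0 ≤ q.2} ∩
              {q : ℝ × ℝ | q.2 ≤ (α - m1 * x - m2 * q.1) / m3} := by
          ext ⟨y, z⟩
          simp [Set.mem_Icc, and_assoc]
        rw [this]
        refine ((measurableSet_Icc.prod MeasurableSet.univ).inter
          (measurableSet_le measurable_const measurable_snd)).inter
          (measurableSet_le measurable_snd
            ((measurable_const.sub (measurable_fst.const_mul m2)).div_const m3))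
      rw [Measure.volume_eq_prod, Measure.prod_apply hTm]
      have hinner : ∀ y : ℝ, volume (Prod.mk y ⁻¹' {q : ℝ × ℝ | q.1 ∈ Set.Icc (0:ℝ) 1 ∧
            q.2 ∈ Set.Icc 0 ((α - m1 * x - m2 * q.1) / m3)}) =
          Set.indicator (Set.Icc (0:ℝ) 1)
            (fun y => ENNReal.ofReal ((α - m1 * x - m2 * y) / m3)) y := by
        intro y
        by_cases hy : y ∈ Set.Icc (0:ℝ) 1
        · rw [Set.indicator_of_mem hy]
          have h2 : Prod.mk y ⁻¹' {q : ℝ × ℝ | q.1 ∈ Set.Icc (0:ℝ) 1 ∧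
              q.2 ∈ Set.Icc 0 ((α - m1 * x - m2 * q.1) / m3)} =
              Set.Icc 0 ((α - m1 * x - m2 * y) / m3) := by
            ext z; simp [Set.mem_Icc, hy.1, hy.2]
          rw [h2, Real.volume_Icc, sub_zero]
        · rw [Set.indicator_of_notMem hy]
          have h2 : Prod.mk y ⁻¹' {q : ℝ × ℝ | q.1 ∈ Set.Icc (0:ℝ) 1 ∧
              q.2 ∈ Set.Icc 0 ((α - m1 * x - m2 * q.1) / m3)} = ∅ := by
            ext z
            simp only [Set.mem_preimage, Set.mem_setOf_eq, Set.mem_empty_iff_false, iff_false,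
              not_and]
            intro hy'; exact absurd hy' hy
          rw [h2]; simp
      simp_rw [hinner]
      rw [lintegral_indicator measurableSet_Icc]
      have hx1 := hx.1; have hx2 := hx.2
      have hres := cut_helper (α - m1 * x) m2 m3 hm3
        (fun y hy => by nlinarith [hy.1, hy.2])
      rw [hres]
    · rw [Set.indicator_of_notMem hx]
      have h2 : Prod.mk x ⁻¹' S = ∅ := by
        ext ⟨y, z⟩
        simp only [hS, Set.mem_preimage, Set.mem_setOf_eq, Set.mem_empty_iff_false, iff_false,
          not_and]
        intro hx'; exact absurd hx' hx
      rw [h2]; simp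
  simp_rw [hslice]
  rw [lintegral_indicator measurableSet_Icc]
  have hfun : (fun x : ℝ => ENNReal.ofReal ((α - m1 * x - m2 / 2) / m3)) =
      fun x : ℝ => ENNReal.ofReal ((α - m2 / 2 - m1 * x) / m3) := by
    funext x; ring_nf
  rw [hfun, cut_helper (α - m2 / 2) m1 m3 hm3 (fun x hx => by nlinarith [hx.1, hx.2])]
  congr 1
  field_simp
  ring
end
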